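/- arXiv:math/0510024 — 7 statements merged into one kernel-verified Lean document; each statement's English description precedes it below -/
import Mathlib

section
/- The Paving Conjecture for finite matrices is equivalent to the Paving Conjecture for bounded operators on ℓ₂: i.e., (for all ε>0 there exists r such that every zero-diagonal operator T on ℓ₂ⁿ for any n admits a partition {A_j}_{j=1}^r of {1,...,n} with ‖Q_{A_j} T Q_{A_j}‖ ≤ ε‖T‖) if and only if (for all ε>0 there exists r such that every zero-diagonal bounded operator T on ℓ₂(ℕ) admits a partition {A_j}_{j=1}^r of ℕ with ‖Q_{A_j} T Q_{A_j}‖ ≤ ε‖T‖). -/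
/-!
Let `P_n : ℓ₂(ℕ) → ℓ₂ⁿ` keep the first `n` coordinates. A matrix `T` on `ℓ₂ⁿ` is the
compression `P_n T' P_n*` of `T' = P_n* T P_n`, which has zero diagonal when `T` does, and a paving
of `T'` restricts to a paving of `T`. Conversely, pave every compression `P_n T P_n*` of an
operator `T` on `ℓ₂(ℕ)` with `r` pieces. By compactness of `(Fin r)^ℕ` (an ultrafilter limit) there
is one colouring of `ℕ` by `r` colours that, on each finite set, agrees with infinitely many of
these finite pavings; since the norm of an operator on `ℓ₂(ℕ)` is the supremum of the norms of its
finite compressions `Q_s S Q_s`, the finite bounds pass to the colouring.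
-/

noncomputable section

open scoped ENNReal

/-- Truncation of an `ℓ²` sequence to a set of coordinates. -/
def truncSeq {I : Type*} (A : Set I) (f : lp (fun _ : I => ℂ) 2) : lp (fun _ : I => ℂ) 2 :=
  ⟨A.indicator f, by
    apply memℓp_gen
    refine Summable.of_nonneg_of_le (fun i => by positivity) (fun i => ?_)
      ((lp.memℓp f).summable (by norm_num))
    exact Real.rpow_le_rpow (norm_nonneg _) (norm_indicator_le_norm_self _ _) (by norm_num)⟩

/-- The diagonal projection `Q_A` on `ℓ₂(I)`. -/
def Qop {I : Type*} (A : Set I) : lp (fun _ : I => ℂ) 2 →L[ℂ] lp (fun _ : I => ℂ) 2 :=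
  LinearMap.mkContinuous
    { toFun := truncSeq A
      map_add' := fun f g => lp.ext (funext fun i => by
        show A.indicator (⇑(f + g)) i = A.indicator (⇑f) i + A.indicator (⇑g) i
        by_cases h : i ∈ A
        · rw [Set.indicator_of_mem h, Set.indicator_of_mem h, Set.indicator_of_mem h]; rfl
        · rw [Set.indicator_of_notMem h, Set.indicator_of_notMem h, Set.indicator_of_notMem h,
            add_zero])
      map_smul' := fun c f => lp.ext (funext fun i => by
        by_cases h : i ∈ A <;>
          simp [truncSeq, h, lp.coeFn_smul, Set.indicator_of_mem, Set.indicator_of_notMem]) }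
    1 (fun f => by
      rw [one_mul]
      refine lp.norm_le_of_tsum_le (p := 2) (by norm_num) (norm_nonneg f) ?_
      have h1 : ‖f‖ ^ (2 : ℝ≥0∞).toReal = ∑' i, ‖f i‖ ^ (2 : ℝ≥0∞).toReal :=
        lp.norm_rpow_eq_tsum (by norm_num) f
      rw [h1]
      refine Summable.tsum_le_tsum (fun i => ?_) ?_ ((lp.memℓp f).summable (by norm_num))
      · exact Real.rpow_le_rpow (norm_nonneg _) (norm_indicator_le_norm_self _ _) (by norm_num)
      · refine Summable.of_nonneg_of_le (fun i => by positivity) (fun i => ?_)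
          ((lp.memℓp f).summable (by norm_num))
        exact Real.rpow_le_rpow (norm_nonneg _) (norm_indicator_le_norm_self _ _) (by norm_num))

/-- The diagonal projection `Q_A` on `ℓ₂ⁿ`. -/
def Qfin {n : ℕ} (A : Finset (Fin n)) :
    EuclideanSpace ℂ (Fin n) →L[ℂ] EuclideanSpace ℂ (Fin n) :=
  LinearMap.toContinuousLinearMap
    { toFun := fun f => WithLp.toLp 2 (fun i => if i ∈ A then f i else 0)
      map_add' := fun f g => by
        ext i
        by_cases h : i ∈ A <;> simp [h, PiLp.add_apply]
      map_smul' := fun c f => by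
        ext i
        by_cases h : i ∈ A <;> simp [h, PiLp.smul_apply] }

open Filter Topology
open scoped InnerProduct

local notation "ℓ²(" I ")" => lp (fun _ : I => ℂ) 2

namespace ContinuousLinearMap

variable {𝕜 E F G H : Type*} [NontriviallyNormedField 𝕜]
  [SeminormedAddCommGroup E] [NormedSpace 𝕜 E] [SeminormedAddCommGroup F] [NormedSpace 𝕜 F]
  [SeminormedAddCommGroup G] [NormedSpace 𝕜 G] [SeminormedAddCommGroup H] [NormedSpace 𝕜 H]

lemma norm_comp_comp_le_of_norm_le_one (X : G →L[𝕜] H) (S : F →L[𝕜] G) (Y : E →L[𝕜] F)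
    (hX : ‖X‖ ≤ 1) (hY : ‖Y‖ ≤ 1) : ‖X ∘L S ∘L Y‖ ≤ ‖S‖ :=
  calc ‖X ∘L S ∘L Y‖ ≤ ‖X‖ * (‖S‖ * ‖Y‖) :=
        (opNorm_comp_le _ _).trans (by gcongr; exact opNorm_comp_le _ _)
    _ ≤ 1 * (‖S‖ * 1) := by gcongr
    _ = ‖S‖ := by ring

end ContinuousLinearMap

lemma inner_comp_comp_adjoint_apply_self {E F : Type*}
    [NormedAddCommGroup E] [InnerProductSpace ℂ E] [CompleteSpace E]
    [NormedAddCommGroup F] [InnerProductSpace ℂ F] [CompleteSpace F]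
    (A : E →L[ℂ] F) (T : E →L[ℂ] E) (y : F) :
    inner ℂ ((A ∘L T ∘L A†) y) y = inner ℂ (T ((A†) y)) ((A†) y) :=
  (A.adjoint_inner_right _ _).symm

lemma inner_adjoint_comp_comp_apply_self {E F : Type*}
    [NormedAddCommGroup E] [InnerProductSpace ℂ E] [CompleteSpace E]
    [NormedAddCommGroup F] [InnerProductSpace ℂ F] [CompleteSpace F]
    (A : E →L[ℂ] F) (T : F →L[ℂ] F) (x : E) :
    inner ℂ ((A† ∘L T ∘L A) x) x = inner ℂ (T (A x)) (A x) :=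
  A.adjoint_inner_left _ _

theorem exists_forall_finset_frequently_of_eventually_exists {ι α β : Type*} [Finite α]
    {l : Filter β} [l.NeBot] {P : β → ι → α → Prop} (h : ∀ i, ∀ᶠ b in l, ∃ a, P b i a) :
    ∃ c : ι → α, ∀ s : Finset ι, ∃ᶠ b in l, ∀ i ∈ s, P b i (c i) := by
  have hU := Ultrafilter.of_le l
  choose c hc using fun i => Ultrafilter.eventually_exists_iff.1 ((h i).filter_mono hU)
  exact ⟨c, fun s => ((eventually_all_finset s).2 fun i _ => hc i).frequently.filter_mono hU⟩

section DiagonalProjection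

variable {I : Type*}

lemma Qop_apply (A : Set I) (f : ℓ²(I)) : ⇑(Qop A f) = A.indicator f := rfl

lemma norm_Qop_le (A : Set I) : ‖Qop (I := I) A‖ ≤ 1 :=
  LinearMap.mkContinuous_norm_le _ zero_le_one _

lemma Qop_Qop (A B : Set I) (f : ℓ²(I)) : Qop A (Qop B f) = Qop (A ∩ B) f :=
  lp.ext (Set.indicator_indicator A B f)

lemma Qop_comp_compress_comp_Qop (A B : Set I) (S : ℓ²(I) →L[ℂ] ℓ²(I)) :
    Qop B ∘L (Qop A ∘L S ∘L Qop A) ∘L Qop B = Qop (B ∩ A) ∘L S ∘L Qop (B ∩ A) := by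
  ext1 f
  simp only [ContinuousLinearMap.comp_apply, Qop_Qop, Set.inter_comm A B]

lemma norm_compress_le_of_subset {A B : Set I} (h : B ⊆ A) (S : ℓ²(I) →L[ℂ] ℓ²(I)) :
    ‖Qop B ∘L S ∘L Qop B‖ ≤ ‖Qop A ∘L S ∘L Qop A‖ := by
  rw [← Set.inter_eq_left.2 h, ← Qop_comp_compress_comp_Qop]
  exact ContinuousLinearMap.norm_comp_comp_le_of_norm_le_one _ _ _ (norm_Qop_le _) (norm_Qop_le _)

lemma tendsto_Qop_finset (f : ℓ²(I)) : Tendsto (fun s : Finset I => Qop ↑s f) atTop (𝓝 f) := by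
  classical
  have hsum : ∀ s : Finset I, Qop ↑s f = ∑ i ∈ s, lp.single 2 i (f i) := fun s => by
    ext i
    rw [Qop_apply, lp.coeFn_sum, Finset.sum_apply]
    simp [lp.single_apply, Pi.single_apply, Set.indicator_apply]
  exact (lp.hasSum_single ENNReal.ofNat_ne_top f).congr fun s => (hsum s).symm

end DiagonalProjection

lemma norm_le_of_forall_finset_norm_compress_le {I : Type*} (S : ℓ²(I) →L[ℂ] ℓ²(I)) {c : ℝ}
    (h : ∀ s : Finset I, ‖Qop ↑s ∘L S ∘L Qop ↑s‖ ≤ c) : ‖S‖ ≤ c := by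
  have hc : 0 ≤ c := (norm_nonneg _).trans (h ∅)
  refine S.opNorm_le_bound hc fun f => ?_
  -- Let `t → ∞` in `Q_t S Q_s f = (Q_t S Q_t) (Q_s f)` for `s ⊆ t`, then let `s → ∞`.
  have hS_Qop : ∀ s : Finset I, ‖S (Qop ↑s f)‖ ≤ c * ‖f‖ := fun s => by
    refine le_of_tendsto (tendsto_Qop_finset _).norm ((eventually_ge_atTop s).mono fun t hst => ?_)
    have hQ : Qop (↑s : Set I) f = Qop ↑t (Qop ↑s f) := by
      rw [Qop_Qop, Set.inter_eq_right.2 (Finset.coe_subset.2 hst)]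
    calc ‖Qop ↑t (S (Qop ↑s f))‖ = ‖(Qop ↑t ∘L S ∘L Qop ↑t) (Qop ↑s f)‖ := by
          rw [ContinuousLinearMap.comp_apply, ContinuousLinearMap.comp_apply, ← hQ]
      _ ≤ c * ‖Qop ↑s f‖ := ContinuousLinearMap.le_of_opNorm_le _ (h t) _
      _ ≤ c * ‖f‖ := by
          gcongr; simpa using ContinuousLinearMap.le_of_opNorm_le _ (norm_Qop_le _) f
  exact le_of_tendsto ((S.continuous.tendsto f).comp (tendsto_Qop_finset f)).norm
    (Eventually.of_forall hS_Qop)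

section FirstCoords

variable (n : ℕ)

def firstCoords : ℓ²(ℕ) →L[ℂ] EuclideanSpace ℂ (Fin n) :=
  LinearMap.mkContinuous
    { toFun := fun f => WithLp.toLp 2 fun k => f k
      map_add' := fun _ _ => rfl
      map_smul' := fun _ _ => rfl }
    1 fun f => by
      have hsum : ∑ k : Fin n, ‖f k‖ ^ 2 ≤ ‖f‖ ^ 2 := by
        simpa [Fin.sum_univ_eq_sum_range (fun i => ‖f i‖ ^ 2)] using
          lp.sum_rpow_le_norm_rpow (p := 2) (by norm_num) f (Finset.range n)
      rw [one_mul, EuclideanSpace.norm_eq]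
      exact Real.sqrt_le_iff.2 ⟨norm_nonneg f, hsum⟩

def extendByZero : EuclideanSpace ℂ (Fin n) →L[ℂ] ℓ²(ℕ) := (firstCoords n)†

variable {n}

lemma firstCoords_apply (f : ℓ²(ℕ)) (k : Fin n) : firstCoords n f k = f k := rfl

lemma norm_firstCoords_le : ‖firstCoords n‖ ≤ 1 :=
  LinearMap.mkContinuous_norm_le _ zero_le_one _

lemma norm_extendByZero_le : ‖extendByZero n‖ ≤ 1 := by
  rw [extendByZero, LinearIsometryEquiv.norm_map]; exact norm_firstCoords_le

lemma firstCoords_single_val (k : Fin n) (a : ℂ) :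
    firstCoords n (lp.single 2 (k : ℕ) a) = EuclideanSpace.single k a := by
  ext l
  simp [firstCoords_apply, lp.single_apply, Pi.single_apply, Fin.val_inj]

lemma firstCoords_single_of_le {i : ℕ} (hi : n ≤ i) (a : ℂ) :
    firstCoords n (lp.single 2 i a) = 0 := by
  ext l
  simp [firstCoords_apply, lp.single_apply, (l.isLt.trans_le hi).ne]

lemma extendByZero_apply (g : EuclideanSpace ℂ (Fin n)) (i : ℕ) :
    extendByZero n g i = inner ℂ (firstCoords n (lp.single 2 i 1)) g := by
  rw [extendByZero, ← ContinuousLinearMap.adjoint_inner_right, lp.inner_single_left]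
  simp

lemma extendByZero_apply_val (g : EuclideanSpace ℂ (Fin n)) (k : Fin n) :
    extendByZero n g k = g k := by
  simp [extendByZero_apply, firstCoords_single_val, EuclideanSpace.inner_single_left]

lemma extendByZero_apply_of_le (g : EuclideanSpace ℂ (Fin n)) {i : ℕ} (hi : n ≤ i) :
    extendByZero n g i = 0 := by
  simp [extendByZero_apply, firstCoords_single_of_le hi]

lemma extendByZero_single (k : Fin n) :
    extendByZero n (EuclideanSpace.single k 1) = lp.single 2 (k : ℕ) 1 := by
  ext i
  rcases lt_or_ge i n with hi | hi
  · obtain ⟨k', rfl⟩ : ∃ k' : Fin n, (k' : ℕ) = i := ⟨⟨i, hi⟩, rfl⟩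
    simp [extendByZero_apply_val, lp.single_apply, Pi.single_apply, Fin.val_inj]
  · rw [extendByZero_apply_of_le _ hi, lp.single_apply_ne _ _ _ (k.isLt.trans_le hi).ne']

end FirstCoords

open Classical in
def finPreimage (n : ℕ) (A : Set ℕ) : Finset (Fin n) :=
  Finset.univ.filter fun k => (k : ℕ) ∈ A

lemma mem_finPreimage {n : ℕ} {A : Set ℕ} {k : Fin n} : k ∈ finPreimage n A ↔ (k : ℕ) ∈ A := by
  simp [finPreimage]

section Compression

variable {n : ℕ}

lemma Qfin_apply (A : Finset (Fin n)) (g : EuclideanSpace ℂ (Fin n)) (k : Fin n) :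
    Qfin A g k = if k ∈ A then g k else 0 := rfl

lemma firstCoords_comp_Qop_comp_extendByZero (A : Set ℕ) :
    firstCoords n ∘L Qop A ∘L extendByZero n = Qfin (finPreimage n A) := by
  ext1 g
  ext k
  rw [ContinuousLinearMap.comp_apply, ContinuousLinearMap.comp_apply, firstCoords_apply,
    Qop_apply, Qfin_apply]
  by_cases hk : (k : ℕ) ∈ A
  · rw [Set.indicator_of_mem hk, extendByZero_apply_val, if_pos (mem_finPreimage.2 hk)]
  · rw [Set.indicator_of_notMem hk, if_neg (mt mem_finPreimage.1 hk)]

lemma extendByZero_comp_Qfin_comp_firstCoords (A : Finset (Fin n)) :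
    extendByZero n ∘L Qfin A ∘L firstCoords n = Qop (Fin.val '' (A : Set (Fin n))) := by
  ext1 f
  ext i
  rcases lt_or_ge i n with hi | hi
  · obtain ⟨k, rfl⟩ : ∃ k : Fin n, (k : ℕ) = i := ⟨⟨i, hi⟩, rfl⟩
    rw [ContinuousLinearMap.comp_apply, ContinuousLinearMap.comp_apply, extendByZero_apply_val,
      Qfin_apply, firstCoords_apply, Qop_apply]
    by_cases hk : k ∈ A
    · rw [if_pos hk, Set.indicator_of_mem (Set.mem_image_of_mem _ hk)]
    · rw [if_neg hk, Set.indicator_of_notMem (by simpa [Fin.val_injective.mem_set_image])]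
  · have hiA : i ∉ Fin.val '' (A : Set (Fin n)) := by
      rintro ⟨k, -, rfl⟩; exact (k.isLt.trans_le hi).false
    simp [extendByZero_apply_of_le _ hi, Qop_apply, hiA]

lemma inner_firstCoords_comp_comp_extendByZero_single {T : ℓ²(ℕ) →L[ℂ] ℓ²(ℕ)}
    (hT : ∀ i : ℕ, inner ℂ (T (lp.single 2 i 1)) (lp.single 2 i 1) = 0) (k : Fin n) :
    inner ℂ ((firstCoords n ∘L T ∘L extendByZero n) (EuclideanSpace.single k 1))
      (EuclideanSpace.single k 1) = 0 := by
  rw [extendByZero, inner_comp_comp_adjoint_apply_self, ← extendByZero, extendByZero_single, hT]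

lemma inner_extendByZero_comp_comp_firstCoords_single
    {T : EuclideanSpace ℂ (Fin n) →L[ℂ] EuclideanSpace ℂ (Fin n)}
    (hT : ∀ k : Fin n, inner ℂ (T (EuclideanSpace.single k 1)) (EuclideanSpace.single k 1) = 0)
    (i : ℕ) :
    inner ℂ ((extendByZero n ∘L T ∘L firstCoords n) (lp.single 2 i 1)) (lp.single 2 i 1) = 0 := by
  rw [extendByZero, inner_adjoint_comp_comp_apply_self]
  rcases lt_or_ge i n with hi | hi
  · obtain ⟨k, rfl⟩ : ∃ k : Fin n, (k : ℕ) = i := ⟨⟨i, hi⟩, rfl⟩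
    rw [firstCoords_single_val, hT]
  · rw [firstCoords_single_of_le hi, map_zero, inner_zero_left]

end Compression

lemma norm_compress_le_of_subset_image {n : ℕ} (T : ℓ²(ℕ) →L[ℂ] ℓ²(ℕ)) {B : Set ℕ}
    {A : Finset (Fin n)} (hB : B ⊆ Fin.val '' (A : Set (Fin n))) :
    ‖Qop B ∘L T ∘L Qop B‖ ≤ ‖Qfin A ∘L (firstCoords n ∘L T ∘L extendByZero n) ∘L Qfin A‖ :=
  calc ‖Qop B ∘L T ∘L Qop B‖
      ≤ ‖Qop (Fin.val '' (A : Set (Fin n))) ∘L T ∘L Qop (Fin.val '' (A : Set (Fin n)))‖ :=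
        norm_compress_le_of_subset hB T
    _ = ‖extendByZero n ∘L (Qfin A ∘L (firstCoords n ∘L T ∘L extendByZero n) ∘L Qfin A) ∘L
          firstCoords n‖ := by
        simp only [← extendByZero_comp_Qfin_comp_firstCoords, ContinuousLinearMap.comp_assoc]
    _ ≤ _ := ContinuousLinearMap.norm_comp_comp_le_of_norm_le_one _ _ _
        norm_extendByZero_le norm_firstCoords_le

def IsFinitePaving {n r : ℕ} (ε : ℝ)
    (T : EuclideanSpace ℂ (Fin n) →L[ℂ] EuclideanSpace ℂ (Fin n)) (A : Fin r → Finset (Fin n)) :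
    Prop :=
  (∀ j k, j ≠ k → Disjoint (A j) (A k)) ∧ Finset.univ.biUnion A = Finset.univ ∧
    ∀ j, ‖Qfin (A j) ∘L T ∘L Qfin (A j)‖ ≤ ε * ‖T‖

def IsL2Paving {r : ℕ} (ε : ℝ) (T : ℓ²(ℕ) →L[ℂ] ℓ²(ℕ)) (A : Fin r → Set ℕ) : Prop :=
  (∀ j k, j ≠ k → Disjoint (A j) (A k)) ∧ (⋃ j, A j) = Set.univ ∧
    ∀ j, ‖Qop (A j) ∘L T ∘L Qop (A j)‖ ≤ ε * ‖T‖

lemma exists_isL2Paving_of_finite_paving {ε : ℝ} (hε : 0 ≤ ε) {r : ℕ}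
    (hfin : ∀ (n : ℕ) (T : EuclideanSpace ℂ (Fin n) →L[ℂ] EuclideanSpace ℂ (Fin n)),
      (∀ i : Fin n, inner ℂ (T (EuclideanSpace.single i 1)) (EuclideanSpace.single i 1) = 0) →
      ∃ A : Fin r → Finset (Fin n), IsFinitePaving ε T A)
    (T : ℓ²(ℕ) →L[ℂ] ℓ²(ℕ)) (hT : ∀ i : ℕ, inner ℂ (T (lp.single 2 i 1)) (lp.single 2 i 1) = 0) :
    ∃ A : Fin r → Set ℕ, IsL2Paving ε T A := by
  choose 𝒜 _ h𝒜_cover h𝒜_norm using fun n =>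
    hfin n _ (inner_firstCoords_comp_comp_extendByZero_single hT)
  -- `c` is a limit colouring: on every finite set it agrees with infinitely many finite pavings.
  obtain ⟨c, hc⟩ := exists_forall_finset_frequently_of_eventually_exists (l := atTop)
    (P := fun n i j => ∃ k : Fin n, (k : ℕ) = i ∧ k ∈ 𝒜 n j) fun i =>
      (eventually_gt_atTop i).mono fun n hin => by
        have hi : (⟨i, hin⟩ : Fin n) ∈ Finset.univ.biUnion (𝒜 n) := by
          rw [h𝒜_cover]; exact Finset.mem_univ _
        obtain ⟨j, -, hj⟩ := Finset.mem_biUnion.1 hi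
        exact ⟨j, _, rfl, hj⟩
  refine ⟨fun j => {i | c i = j}, fun j k hjk => Set.disjoint_left.2 fun i hij hik =>
    hjk (hij.symm.trans hik), Set.iUnion_eq_univ_iff.2 fun i => ⟨c i, rfl⟩, fun j => ?_⟩
  refine norm_le_of_forall_finset_norm_compress_le _ fun s => ?_
  obtain ⟨n, hn⟩ := (hc s).exists
  have hsub : ↑s ∩ {i | c i = j} ⊆ Fin.val '' (𝒜 n j : Set (Fin n)) := by
    rintro i ⟨his, rfl⟩
    obtain ⟨k, rfl, hk⟩ := hn i his
    exact Set.mem_image_of_mem _ hk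
  calc ‖Qop ↑s ∘L (Qop {i | c i = j} ∘L T ∘L Qop {i | c i = j}) ∘L Qop ↑s‖
      ≤ ‖Qfin (𝒜 n j) ∘L (firstCoords n ∘L T ∘L extendByZero n) ∘L Qfin (𝒜 n j)‖ := by
        rw [Qop_comp_compress_comp_Qop]; exact norm_compress_le_of_subset_image T hsub
    _ ≤ ε * ‖firstCoords n ∘L T ∘L extendByZero n‖ := h𝒜_norm n j
    _ ≤ ε * ‖T‖ := by
        gcongr
        exact ContinuousLinearMap.norm_comp_comp_le_of_norm_le_one _ _ _
          norm_firstCoords_le norm_extendByZero_le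

lemma exists_isFinitePaving_of_l2_paving {ε : ℝ} (hε : 0 ≤ ε) {r : ℕ}
    (hl2 : ∀ T : ℓ²(ℕ) →L[ℂ] ℓ²(ℕ),
      (∀ i : ℕ, inner ℂ (T (lp.single 2 i 1)) (lp.single 2 i 1) = 0) →
      ∃ A : Fin r → Set ℕ, IsL2Paving ε T A)
    (n : ℕ) (T : EuclideanSpace ℂ (Fin n) →L[ℂ] EuclideanSpace ℂ (Fin n))
    (hT : ∀ i : Fin n, inner ℂ (T (EuclideanSpace.single i 1)) (EuclideanSpace.single i 1) = 0) :
    ∃ A : Fin r → Finset (Fin n), IsFinitePaving ε T A := by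
  obtain ⟨A, hA_disj, hA_cover, hA_norm⟩ :=
    hl2 (extendByZero n ∘L T ∘L firstCoords n) (inner_extendByZero_comp_comp_firstCoords_single hT)
  refine ⟨fun j => finPreimage n (A j), fun j k hjk => Finset.disjoint_left.2 fun i hij hik =>
    Set.disjoint_left.1 (hA_disj j k hjk) (mem_finPreimage.1 hij) (mem_finPreimage.1 hik),
    Finset.eq_univ_of_forall fun i => ?_, fun j => ?_⟩
  · obtain ⟨j, hj⟩ := Set.iUnion_eq_univ_iff.1 hA_cover i
    exact Finset.mem_biUnion.2 ⟨j, Finset.mem_univ j, mem_finPreimage.2 hj⟩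
  calc ‖Qfin (finPreimage n (A j)) ∘L T ∘L Qfin (finPreimage n (A j))‖
      = ‖firstCoords n ∘L (Qop (A j) ∘L (extendByZero n ∘L T ∘L firstCoords n) ∘L Qop (A j)) ∘L
          extendByZero n‖ := by
        simp only [← firstCoords_comp_Qop_comp_extendByZero, ContinuousLinearMap.comp_assoc]
    _ ≤ ‖Qop (A j) ∘L (extendByZero n ∘L T ∘L firstCoords n) ∘L Qop (A j)‖ :=
        ContinuousLinearMap.norm_comp_comp_le_of_norm_le_one _ _ _
          norm_firstCoords_le norm_extendByZero_le
    _ ≤ ε * ‖extendByZero n ∘L T ∘L firstCoords n‖ := hA_norm j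
    _ ≤ ε * ‖T‖ := by
        gcongr
        exact ContinuousLinearMap.norm_comp_comp_le_of_norm_le_one _ _ _
          norm_extendByZero_le norm_firstCoords_le

theorem paving_finite_iff_paving_l2 :
    -- Paving Conjecture for matrices on `ℓ₂ⁿ`
    (∀ ε : ℝ, 0 < ε → ∃ r : ℕ,
      ∀ (n : ℕ) (T : EuclideanSpace ℂ (Fin n) →L[ℂ] EuclideanSpace ℂ (Fin n)),
        (∀ i : Fin n, (inner ℂ (T (EuclideanSpace.single i 1)) (EuclideanSpace.single i 1) : ℂ) = 0) →
        ∃ A : Fin r → Finset (Fin n),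
          (∀ j k, j ≠ k → Disjoint (A j) (A k)) ∧
          (Finset.univ.biUnion A = Finset.univ) ∧
          ∀ j, ‖(Qfin (A j)).comp (T.comp (Qfin (A j)))‖ ≤ ε * ‖T‖)
    ↔
    -- Paving Conjecture for bounded operators on `ℓ₂(ℕ)`
    (∀ ε : ℝ, 0 < ε → ∃ r : ℕ,
      ∀ T : lp (fun _ : ℕ => ℂ) 2 →L[ℂ] lp (fun _ : ℕ => ℂ) 2,
        (∀ i : ℕ, (inner ℂ (T (lp.single 2 i 1)) (lp.single 2 i 1) : ℂ) = 0) →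
        ∃ A : Fin r → Set ℕ,
          (∀ j k, j ≠ k → Disjoint (A j) (A k)) ∧
          (⋃ j, A j) = Set.univ ∧
          ∀ j, ‖(Qop (A j)).comp (T.comp (Qop (A j)))‖ ≤ ε * ‖T‖) := by
  constructor
  · intro hfin ε hε
    obtain ⟨r, hr⟩ := hfin ε hε
    exact ⟨r, exists_isL2Paving_of_finite_paving hε.le hr⟩
  · intro hl2 ε hε
    obtain ⟨r, hr⟩ := hl2 ε hε
    exact ⟨r, exists_isFinitePaving_of_l2_paving hε.le hr⟩
end
end

section
/- Let {f_i}_{i∈I} and {g_i}_{i∈I} be frames for a Hilbert space H with analysis operators T₁* and T₂* (equivalently, synthesis operators T₁, T₂ with T₁e_i = f_i, T₂e_i = g_i). Then the frames are equivalent (there exists an invertible bounded operator L on H with L f_i = g_i for all i) if and only if ker T₁ = ker T₂. -/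
/-!
A lower frame bound says `A ‖x‖² ≤ ‖T* x‖²`, so `T T*` is coercive, hence invertible, and the
synthesis operator `T` is onto. Two surjections of a Banach space with a common kernel `K` both
descend to isomorphisms out of the quotient by `K` (open mapping theorem), and composing one with
the inverse of the other gives `L`. Conversely, `L f_i = g_i` forces `T₂ = L T₁`, since both agree on
the unit vectors, whose span is dense in `ℓ²`.
-/

open ContinuousLinearMap

section OpenMapping

variable {𝕜 E F G : Type*} [NontriviallyNormedField 𝕜]
  [NormedAddCommGroup E] [NormedSpace 𝕜 E] [CompleteSpace E]
  [NormedAddCommGroup F] [NormedSpace 𝕜 F] [CompleteSpace F]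
  [NormedAddCommGroup G] [NormedSpace 𝕜 G] [CompleteSpace G]

theorem ContinuousLinearMap.exists_quotient_equiv_of_ker_eq (T : E →L[𝕜] F)
    (hT : Function.Surjective T) (K : Submodule 𝕜 E) (hK : LinearMap.ker (T : E →ₗ[𝕜] F) = K) :
    ∃ e : (E ⧸ K) ≃L[𝕜] F, ∀ x, e (K.mkQ x) = T x := by
  subst hK
  -- makes `E ⧸ ker T` a normed (Hausdorff) space, as `ofBijective` needs
  have : IsClosed (LinearMap.ker (T : E →ₗ[𝕜] F) : Set E) := T.isClosed_ker
  refine ⟨.ofBijective (Submodule.liftQL _ T le_rfl) ?_ ?_, fun x => rfl⟩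
  · exact Submodule.ker_liftQ_eq_bot _ _ _ le_rfl
  · change LinearMap.range (Submodule.liftQ _ (T : E →ₗ[𝕜] F) le_rfl) = ⊤
    rw [Submodule.range_liftQ, LinearMap.range_eq_top]
    exact hT

theorem ContinuousLinearMap.exists_equiv_comp_eq_of_ker_eq (T₁ : E →L[𝕜] F) (T₂ : E →L[𝕜] G)
    (h₁ : Function.Surjective T₁) (h₂ : Function.Surjective T₂)
    (hker : LinearMap.ker (T₁ : E →ₗ[𝕜] F) = LinearMap.ker (T₂ : E →ₗ[𝕜] G)) :
    ∃ L : F ≃L[𝕜] G, ∀ x, L (T₁ x) = T₂ x := by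
  obtain ⟨e₁, he₁⟩ := T₁.exists_quotient_equiv_of_ker_eq h₁ _ rfl
  obtain ⟨e₂, he₂⟩ := T₂.exists_quotient_equiv_of_ker_eq h₂ _ hker.symm
  exact ⟨e₁.symm.trans e₂, fun x => by
    rw [ContinuousLinearEquiv.trans_apply, ← he₁, e₁.symm_apply_apply, he₂]⟩

end OpenMapping

section Adjoint

variable {𝕜 E F : Type*} [RCLike 𝕜]
  [NormedAddCommGroup E] [InnerProductSpace 𝕜 E] [CompleteSpace E]
  [NormedAddCommGroup F] [InnerProductSpace 𝕜 F] [CompleteSpace F]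

theorem ContinuousLinearMap.surjective_of_le_norm_adjoint_sq (T : E →L[𝕜] F) {c : ℝ}
    (hc : 0 < c) (h : ∀ y, c * ‖y‖ ^ 2 ≤ ‖adjoint T y‖ ^ 2) : Function.Surjective T := by
  have hunit : IsUnit (T ∘L adjoint T) := by
    refine isUnit_of_forall_le_norm_inner_map _ (c := ⟨c, hc.le⟩) hc fun y => ?_
    rw [comp_apply, ← adjoint_inner_right, inner_self_eq_norm_sq_to_K, norm_pow,
      RCLike.norm_ofReal, abs_norm, mul_comm]
    exact h y
  have hsurj := (isUnit_iff_bijective.mp hunit).2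
  rw [coe_comp] at hsurj
  exact hsurj.of_comp

end Adjoint

namespace lp

theorem norm_sq_eq_tsum {ι : Type*} {F : ι → Type*} [∀ i, NormedAddCommGroup (F i)]
    (a : lp F 2) : ‖a‖ ^ 2 = ∑' i, ‖a i‖ ^ 2 := by
  simpa [Real.rpow_natCast] using lp.norm_rpow_eq_tsum (p := 2) (by norm_num) a

variable {𝕜 E ι : Type*} [RCLike 𝕜] [NormedAddCommGroup E] [InnerProductSpace 𝕜 E]
  [CompleteSpace E] [DecidableEq ι]

theorem adjoint_apply (T : lp (fun _ : ι => 𝕜) 2 →L[𝕜] E) (x : E) (i : ι) :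
    adjoint T x i = inner 𝕜 (T (lp.single 2 i 1)) x := by
  simpa [adjoint_inner_right] using (lp.inner_single_left (𝕜 := 𝕜) i (1 : 𝕜) (adjoint T x)).symm

theorem norm_adjoint_sq (T : lp (fun _ : ι => 𝕜) 2 →L[𝕜] E) (x : E) :
    ‖adjoint T x‖ ^ 2 = ∑' i, ‖inner 𝕜 x (T (lp.single 2 i 1))‖ ^ 2 := by
  simp_rw [norm_sq_eq_tsum, adjoint_apply, ← inner_conj_symm x, RCLike.norm_conj]

theorem surjective_of_lower_frame_bound (T : lp (fun _ : ι => 𝕜) 2 →L[𝕜] E) {A : ℝ}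
    (hA : 0 < A) (h : ∀ x, A * ‖x‖ ^ 2 ≤ ∑' i, ‖inner 𝕜 x (T (lp.single 2 i 1))‖ ^ 2) :
    Function.Surjective T :=
  T.surjective_of_le_norm_adjoint_sq hA fun x => norm_adjoint_sq T x ▸ h x

end lp

theorem frames_equivalent_iff_ker_eq_general
    {H : Type*} [NormedAddCommGroup H] [InnerProductSpace ℂ H] [CompleteSpace H]
    {I : Type*} [DecidableEq I]
    (T₁ T₂ : lp (fun _ : I => ℂ) 2 →L[ℂ] H) (f g : I → H)
    (hf : ∀ i, T₁ (lp.single 2 i 1) = f i)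
    (hg : ∀ i, T₂ (lp.single 2 i 1) = g i)
    (A₁ B₁ : ℝ) (hA₁ : 0 < A₁)
    (hframe₁ : ∀ x : H,
      Summable (fun i => ‖(inner ℂ x (f i) : ℂ)‖ ^ 2) ∧
      A₁ * ‖x‖ ^ 2 ≤ ∑' i, ‖(inner ℂ x (f i) : ℂ)‖ ^ 2 ∧
      ∑' i, ‖(inner ℂ x (f i) : ℂ)‖ ^ 2 ≤ B₁ * ‖x‖ ^ 2)
    (A₂ B₂ : ℝ) (hA₂ : 0 < A₂)
    (hframe₂ : ∀ x : H,
      Summable (fun i => ‖(inner ℂ x (g i) : ℂ)‖ ^ 2) ∧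
      A₂ * ‖x‖ ^ 2 ≤ ∑' i, ‖(inner ℂ x (g i) : ℂ)‖ ^ 2 ∧
      ∑' i, ‖(inner ℂ x (g i) : ℂ)‖ ^ 2 ≤ B₂ * ‖x‖ ^ 2) :
    (∃ L : H ≃L[ℂ] H, ∀ i, L (f i) = g i) ↔
      LinearMap.ker (T₁ : lp (fun _ : I => ℂ) 2 →ₗ[ℂ] H) =
        LinearMap.ker (T₂ : lp (fun _ : I => ℂ) 2 →ₗ[ℂ] H) := by
  obtain rfl : f = fun i => T₁ (lp.single 2 i 1) := funext fun i => (hf i).symm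
  obtain rfl : g = fun i => T₂ (lp.single 2 i 1) := funext fun i => (hg i).symm
  constructor
  · rintro ⟨L, hL⟩
    have hT : T₂ = (L : H →L[ℂ] H) ∘L T₁ :=
      lp.ext_continuousLinearMap ENNReal.ofNat_ne_top fun i =>
        ContinuousLinearMap.ext_ring (by simp [hL])
    ext x
    simp [hT]
  · intro hker
    obtain ⟨L, hL⟩ := T₁.exists_equiv_comp_eq_of_ker_eq T₂
      (lp.surjective_of_lower_frame_bound T₁ hA₁ fun x => (hframe₁ x).2.1)
      (lp.surjective_of_lower_frame_bound T₂ hA₂ fun x => (hframe₂ x).2.1) hker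
    exact ⟨L, fun i => hL _⟩

/-- Two frames `{f_i}` and `{g_i}` with synthesis operators `T₁, T₂` are equivalent
(there is an invertible bounded operator `L` with `L f_i = g_i`) if and only if
`ker T₁ = ker T₂`. -/
theorem frames_equivalent_iff_ker_eq
    {H : Type*} [NormedAddCommGroup H] [InnerProductSpace ℂ H] [CompleteSpace H]
    {I : Type*} [DecidableEq I]
    (T₁ T₂ : lp (fun _ : I => ℂ) 2 →L[ℂ] H) (f g : I → H)
    (hf : ∀ i, T₁ (lp.single 2 i 1) = f i)
    (hg : ∀ i, T₂ (lp.single 2 i 1) = g i)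
    (A₁ B₁ : ℝ) (hA₁ : 0 < A₁) (hB₁ : A₁ ≤ B₁)
    (hframe₁ : ∀ x : H,
      Summable (fun i => ‖(inner ℂ x (f i) : ℂ)‖ ^ 2) ∧
      A₁ * ‖x‖ ^ 2 ≤ ∑' i, ‖(inner ℂ x (f i) : ℂ)‖ ^ 2 ∧
      ∑' i, ‖(inner ℂ x (f i) : ℂ)‖ ^ 2 ≤ B₁ * ‖x‖ ^ 2)
    (A₂ B₂ : ℝ) (hA₂ : 0 < A₂) (hB₂ : A₂ ≤ B₂)
    (hframe₂ : ∀ x : H,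
      Summable (fun i => ‖(inner ℂ x (g i) : ℂ)‖ ^ 2) ∧
      A₂ * ‖x‖ ^ 2 ≤ ∑' i, ‖(inner ℂ x (g i) : ℂ)‖ ^ 2 ∧
      ∑' i, ‖(inner ℂ x (g i) : ℂ)‖ ^ 2 ≤ B₂ * ‖x‖ ^ 2) :
    (∃ L : H ≃L[ℂ] H, ∀ i, L (f i) = g i) ↔
      LinearMap.ker (T₁ : lp (fun _ : I => ℂ) 2 →ₗ[ℂ] H) =
        LinearMap.ker (T₂ : lp (fun _ : I => ℂ) 2 →ₗ[ℂ] H) :=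
  frames_equivalent_iff_ker_eq_general T₁ T₂ f g hf hg A₁ B₁ hA₁ hframe₁ A₂ B₂ hA₂ hframe₂
end

section
/- A family {f_i}_{i∈I} in a Hilbert space H is a Parseval frame for H if and only if there exists a Hilbert space ℓ₂(I) containing H (as a closed subspace, up to isometric identification) with orthonormal basis {e_i}_{i∈I} such that the orthogonal projection P of ℓ₂(I) onto H satisfies P e_i = f_i for all i ∈ I. -/
/-!
A family `f` is a Parseval frame exactly when its analysis operator `x ↦ (⟪f i, x⟫)ᵢ` is an
isometry `H → ℓ²(I)`. For an isometry `J`, the orthogonal projection onto `range J` sends `eᵢ` to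
`J v` iff `⟪J x, eᵢ⟫ = ⟪J x, J v⟫ = ⟪x, v⟫` for all `x`, i.e. iff the `i`-th coordinate of `J x` is
`⟪v, x⟫`; so `P eᵢ = J (f i)` for all `i` says precisely that `J` is the analysis operator of `f`.
A self-adjoint idempotent is the orthogonal projection onto its range, so `P` is determined by `J`.
-/

open scoped InnerProductSpace

section ParsevalFrame

variable {𝕜 E ι : Type*} [RCLike 𝕜] [NormedAddCommGroup E] [InnerProductSpace 𝕜 E]

variable (𝕜) in
def IsParsevalFrame (f : ι → E) : Prop :=
  ∀ x : E, HasSum (fun i => ‖⟪x, f i⟫_𝕜‖ ^ 2) (‖x‖ ^ 2)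

theorem lp.hasSum_norm_sq {G : ι → Type*} [∀ i, NormedAddCommGroup (G i)] (x : lp G 2) :
    HasSum (fun i => ‖x i‖ ^ 2) (‖x‖ ^ 2) := by
  simpa using lp.hasSum_norm (p := 2) (by norm_num) x

namespace IsParsevalFrame

variable {f : ι → E}

theorem memℓp_inner (hf : IsParsevalFrame 𝕜 f) (x : E) : Memℓp (fun i => ⟪f i, x⟫_𝕜) 2 := by
  refine memℓp_gen ?_
  simpa [norm_inner_symm] using (hf x).summable

def analysisOperator (hf : IsParsevalFrame 𝕜 f) : E →ₗᵢ[𝕜] lp (fun _ : ι => 𝕜) 2 where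
  toFun x := ⟨fun i => ⟪f i, x⟫_𝕜, hf.memℓp_inner x⟩
  map_add' x y := lp.ext <| funext fun i => inner_add_right (f i) x y
  map_smul' c x := lp.ext <| funext fun i => inner_smul_right (f i) x c
  norm_map' x := by
    refine (sq_eq_sq₀ (norm_nonneg _) (norm_nonneg _)).mp ((lp.hasSum_norm_sq _).unique ?_)
    simpa [norm_inner_symm] using hf x

@[simp]
theorem analysisOperator_apply (hf : IsParsevalFrame 𝕜 f) (x : E) (i : ι) :
    hf.analysisOperator x i = ⟪f i, x⟫_𝕜 :=
  rfl

end IsParsevalFrame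

theorem LinearIsometry.isParsevalFrame {f : ι → E} (J : E →ₗᵢ[𝕜] lp (fun _ : ι => 𝕜) 2)
    (hJ : ∀ i x, J x i = ⟪f i, x⟫_𝕜) : IsParsevalFrame 𝕜 f := fun x => by
  simpa [hJ, norm_inner_symm, J.norm_map] using lp.hasSum_norm_sq (J x)

theorem isParsevalFrame_iff_exists_linearIsometry {f : ι → E} :
    IsParsevalFrame 𝕜 f ↔ ∃ J : E →ₗᵢ[𝕜] lp (fun _ : ι => 𝕜) 2, ∀ i x, J x i = ⟪f i, x⟫_𝕜 :=
  ⟨fun hf => ⟨hf.analysisOperator, fun i x => hf.analysisOperator_apply x i⟩,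
    fun ⟨J, hJ⟩ => J.isParsevalFrame hJ⟩

section Projection

variable {F : Type*} [NormedAddCommGroup F] [InnerProductSpace 𝕜 F]

instance LinearIsometry.hasOrthogonalProjection_range [CompleteSpace E] (J : E →ₗᵢ[𝕜] F) :
    (LinearMap.range J.toLinearMap).HasOrthogonalProjection :=
  have : CompleteSpace (LinearMap.range J.toLinearMap) :=
    J.isometry.isUniformInducing.isComplete_range.completeSpace_coe
  .ofCompleteSpace _

theorem IsStarProjection.eq_starProjection_of_range_eq [CompleteSpace F] {P : F →L[𝕜] F}
    (hP : IsStarProjection P) {K : Submodule 𝕜 F} [K.HasOrthogonalProjection]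
    (hK : LinearMap.range P.toLinearMap = K) : P = K.starProjection := by
  obtain ⟨_, hP⟩ := isStarProjection_iff_eq_starProjection_range.mp hP
  subst hK
  exact hP

end Projection

theorem LinearIsometry.starProjection_range_single_eq_iff [DecidableEq ι] [CompleteSpace E]
    (J : E →ₗᵢ[𝕜] lp (fun _ : ι => 𝕜) 2) (i : ι) (v : E) :
    (LinearMap.range J.toLinearMap).starProjection (lp.single 2 i 1) = J v ↔
      ∀ x, J x i = ⟪v, x⟫_𝕜 := by
  set K := LinearMap.range J.toLinearMap
  have inner_single (x : E) : ⟪lp.single 2 i (1 : 𝕜), J x⟫_𝕜 = J x i := by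
    simp [lp.inner_single_left]
  constructor
  · intro h x
    have hJx : K.starProjection (J x) = J x := Submodule.starProjection_eq_self_iff.mpr ⟨x, rfl⟩
    rw [← inner_single, ← J.inner_map_map, ← h, K.inner_starProjection_left_eq_right, hJx]
  · intro h
    refine Submodule.eq_starProjection_of_mem_of_inner_eq_zero ⟨v, rfl⟩ ?_
    rintro _ ⟨x, rfl⟩
    simp [inner_sub_left, inner_single, h]

end ParsevalFrame

/-- Naimark's theorem: `{f_i}_{i∈I}` is a Parseval frame for `H` iff `H` embeds
isometrically into `ℓ₂(I)` in such a way that the orthogonal projection `P` of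
`ℓ₂(I)` onto (the image of) `H` satisfies `P e_i = f_i` for all `i`. -/
theorem parseval_frame_iff_naimark
    {H : Type*} [NormedAddCommGroup H] [InnerProductSpace ℂ H] [CompleteSpace H]
    {I : Type*} [DecidableEq I] (f : I → H) :
    (∀ x : H, HasSum (fun i => ‖(inner ℂ x (f i) : ℂ)‖ ^ 2) (‖x‖ ^ 2)) ↔
    ∃ (J : H →ₗᵢ[ℂ] lp (fun _ : I => ℂ) 2)
      (P : lp (fun _ : I => ℂ) 2 →L[ℂ] lp (fun _ : I => ℂ) 2),
      IsIdempotentElem P ∧ IsSelfAdjoint P ∧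
      LinearMap.range P.toLinearMap = LinearMap.range J.toLinearMap ∧
      ∀ i, P (lp.single 2 i 1) = J (f i) := by
  change IsParsevalFrame ℂ f ↔ _
  simp_rw [isParsevalFrame_iff_exists_linearIsometry,
    ← LinearIsometry.starProjection_range_single_eq_iff]
  refine exists_congr fun J => ⟨fun h => ?_, ?_⟩
  · exact ⟨_, Submodule.isIdempotentElem_starProjection _, isSelfAdjoint_starProjection _,
      Submodule.range_starProjection _, h⟩
  · rintro ⟨P, hidem, hsa, hrange, hP⟩
    rwa [← IsStarProjection.eq_starProjection_of_range_eq ⟨hidem, hsa⟩ hrange]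
end

section
/- Let H be an n-dimensional Hilbert space with orthonormal basis {g_i}_{i=1}^n, and let T: H → H be a linear operator with ‖T‖ = 1. Then there is a Hilbert space ℓ₂^{2n-1} containing H with orthonormal basis {e_i}_{i=1}^{2n-1} such that the orthogonal projection P of ℓ₂^{2n-1} onto H satisfies P e_i = T g_i for all i = 1,...,n. -/
open scoped InnerProductSpace
open Module ContinuousLinearMap

/-!
The vectors `T gᵢ` satisfy `∑ᵢ |⟪T gᵢ, x⟫|² = ‖T* x‖²`. Since `‖T*‖ = 1` is attained at a unit
vector `x₀`, the defect operator `D = (1 - T T*)^{1/2}` kills `x₀`, so its range lies in the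
`(n - 1)`-dimensional space `x₀ᗮ`; expanding `‖D x‖²` in an orthonormal basis of `x₀ᗮ` gives
`n - 1` vectors `v_k` with `∑ₖ |⟪v_k, x⟫|² = ‖x‖² - ‖T* x‖²`. Together with the `T gᵢ` they form a
Parseval frame of `2n - 1` vectors, whose analysis operator `J` is an isometry into `ℓ₂^{2n-1}`
with `J* eᵢ = T gᵢ`; hence the projection `J J*` onto the range of `J` maps `eᵢ` to `J (T gᵢ)`.
-/

theorem ContinuousLinearMap.exists_norm_eq_one_norm_apply_eq_opNorm {𝕜 E F : Type*} [RCLike 𝕜]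
    [NormedAddCommGroup E] [NormedSpace 𝕜 E] [FiniteDimensional 𝕜 E] [Nontrivial E]
    [NormedAddCommGroup F] [NormedSpace 𝕜 F] (f : E →L[𝕜] F) :
    ∃ x, ‖x‖ = 1 ∧ ‖f x‖ = ‖f‖ := by
  have := FiniteDimensional.proper_rclike 𝕜 E
  have : NormedSpace ℝ E := NormedSpace.restrictScalars ℝ 𝕜 E
  obtain ⟨x, hx, hmax⟩ := (isCompact_sphere (0 : E) 1).exists_sSup_image_eq
    (NormedSpace.sphere_nonempty.mpr zero_le_one)
    (by fun_prop : Continuous fun x => ‖f x‖).continuousOn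
  exact ⟨x, mem_sphere_zero_iff_norm.mp hx, hmax ▸ f.sSup_sphere_eq_norm⟩

section RCLike

variable {𝕜 E F : Type*} [RCLike 𝕜] [NormedAddCommGroup E] [InnerProductSpace 𝕜 E]
  [NormedAddCommGroup F] [InnerProductSpace 𝕜 F]

theorem ContinuousLinearMap.exists_norm_apply_sq_eq_sum_of_mem [CompleteSpace E]
    [CompleteSpace F] (S : E →L[𝕜] F) {K : Submodule 𝕜 F} [FiniteDimensional 𝕜 K] {m : ℕ}
    (hK : finrank 𝕜 K = m) (hS : ∀ x, S x ∈ K) :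
    ∃ v : Fin m → E, ∀ x, ‖S x‖ ^ 2 = ∑ k, ‖⟪v k, x⟫_𝕜‖ ^ 2 := by
  let c := (stdOrthonormalBasis 𝕜 K).reindex (finCongr hK)
  refine ⟨fun k => adjoint S (c k), fun x => ?_⟩
  simp_rw [adjoint_inner_left]
  simpa using (c.sum_sq_norm_inner_right ⟨S x, hS x⟩).symm

variable {ι : Type*} [Fintype ι]

noncomputable def analysisIsometry (u : ι → E)
    (hu : ∀ x, ∑ p, ‖⟪u p, x⟫_𝕜‖ ^ 2 = ‖x‖ ^ 2) : E →ₗᵢ[𝕜] EuclideanSpace 𝕜 ι where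
  toLinearMap := (WithLp.linearEquiv 2 𝕜 (ι → 𝕜)).symm.toLinearMap ∘ₗ
    LinearMap.pi fun p => innerₛₗ 𝕜 (u p)
  norm_map' x := by
    rw [EuclideanSpace.norm_eq, ← Real.sqrt_sq (norm_nonneg x), ← hu x]
    rfl

variable {u : ι → E} {hu : ∀ x, ∑ p, ‖⟪u p, x⟫_𝕜‖ ^ 2 = ‖x‖ ^ 2}

@[simp]
theorem analysisIsometry_apply (x : E) (p : ι) : analysisIsometry u hu x p = ⟪u p, x⟫_𝕜 := rfl

theorem starProjection_range_analysisIsometry_single [DecidableEq ι] (p : ι) :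
    (LinearMap.range (analysisIsometry u hu).toLinearMap).starProjection
      (EuclideanSpace.single p 1) = analysisIsometry u hu (u p) := by
  refine Submodule.eq_starProjection_of_mem_of_inner_eq_zero (LinearMap.mem_range_self _ _) ?_
  rintro - ⟨y, rfl⟩
  rw [inner_sub_left, LinearIsometry.coe_toLinearMap, LinearIsometry.inner_map_map,
    EuclideanSpace.inner_single_left]
  simp

end RCLike

section Defect

variable {H : Type*} [NormedAddCommGroup H] [InnerProductSpace ℂ H]

noncomputable def starDefect [CompleteSpace H] (T : H →L[ℂ] H) : H →L[ℂ] H :=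
  CFC.sqrt (1 - T * star T)

theorem isSelfAdjoint_starDefect [CompleteSpace H] (T : H →L[ℂ] H) :
    IsSelfAdjoint (starDefect T) :=
  (CFC.sqrt_nonneg _).isSelfAdjoint

theorem norm_adjoint_apply_sq_add_norm_starDefect_apply_sq [CompleteSpace H] {T : H →L[ℂ] H}
    (hT : ‖T‖ ≤ 1) (x : H) : ‖adjoint T x‖ ^ 2 + ‖starDefect T x‖ ^ 2 = ‖x‖ ^ 2 := by
  have hD : 0 ≤ 1 - T * star T := by
    refine sub_nonneg.mpr (CStarAlgebra.mul_star_le_algebraMap_norm_sq.trans ?_)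
    simpa using algebraMap_mono (H →L[ℂ] H) (pow_le_one₀ (norm_nonneg T) hT)
  have hS : adjoint (starDefect T) ∘L starDefect T = 1 - T * star T := by
    rw [← star_eq_adjoint, (isSelfAdjoint_starDefect T).star_eq]
    exact CFC.sqrt_mul_sqrt_self _ hD
  have hT' : adjoint (adjoint T) ∘L adjoint T = T * star T := by
    rw [adjoint_adjoint, star_eq_adjoint]; rfl
  rw [apply_norm_sq_eq_inner_adjoint_left, apply_norm_sq_eq_inner_adjoint_left, hS, hT',
    ← map_add, ← inner_add_left, ← add_apply, add_sub_cancel, one_apply_eq_self,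
    inner_self_eq_norm_sq]

theorem exists_norm_adjoint_apply_sq_add_sum_eq [FiniteDimensional ℂ H] {n : ℕ}
    (hn : finrank ℂ H = n) {T : H →L[ℂ] H} (hT : ‖T‖ = 1) :
    ∃ v : Fin (n - 1) → H, ∀ x, ‖adjoint T x‖ ^ 2 + ∑ k, ‖⟪v k, x⟫_ℂ‖ ^ 2 = ‖x‖ ^ 2 := by
  have : Nontrivial H := by
    by_contra h
    rw [not_nontrivial_iff_subsingleton] at h
    simp [Subsingleton.elim T 0] at hT
  have : Fact (finrank ℂ H = n - 1 + 1) := ⟨by have := finrank_pos (R := ℂ) (M := H); omega⟩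
  obtain ⟨x₀, hx₀, hTx₀⟩ := (adjoint T).exists_norm_eq_one_norm_apply_eq_opNorm
  rw [LinearIsometryEquiv.norm_map, hT] at hTx₀
  have hD := norm_adjoint_apply_sq_add_norm_starDefect_apply_sq hT.le
  have hDx₀ : starDefect T x₀ = 0 := by simpa [hTx₀, hx₀] using hD x₀
  have hrange : ∀ x, starDefect T x ∈ (ℂ ∙ x₀)ᗮ := fun x => by
    rw [Submodule.mem_orthogonal_singleton_iff_inner_right]
    simpa [hDx₀] using ((isSelfAdjoint_starDefect T).isSymmetric x₀ x).symm
  obtain ⟨v, hv⟩ := (starDefect T).exists_norm_apply_sq_eq_sum_of_mem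
    (Submodule.finrank_orthogonal_span_singleton (n := n - 1)
      (ne_zero_of_norm_ne_zero (hx₀.trans_ne one_ne_zero))) hrange
  exact ⟨v, fun x => hv x ▸ hD x⟩

end Defect

/-- Fundamental Principle II: every norm-one operator `T` on an `n`-dimensional
Hilbert space `H` with orthonormal basis `{g_i}` is a "piece" of a projection:
`H` embeds isometrically into `ℓ₂^{2n-1}` (realized as `ℓ₂(Fin n ⊕ Fin (n-1))`)
so that the orthogonal projection `P` onto (the image of) `H` satisfies
`P e_i = T g_i` for `i = 1,…,n`. -/
theorem fundamental_principle_II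
    {H : Type*} [NormedAddCommGroup H] [InnerProductSpace ℂ H]
    (n : ℕ) (g : OrthonormalBasis (Fin n) ℂ H)
    (T : H →L[ℂ] H) (hT : ‖T‖ = 1) :
    ∃ (J : H →ₗᵢ[ℂ] EuclideanSpace ℂ (Fin n ⊕ Fin (n - 1)))
      (P : EuclideanSpace ℂ (Fin n ⊕ Fin (n - 1)) →L[ℂ]
        EuclideanSpace ℂ (Fin n ⊕ Fin (n - 1))),
      IsIdempotentElem P ∧ IsSelfAdjoint P ∧
      LinearMap.range P.toLinearMap = LinearMap.range J.toLinearMap ∧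
      ∀ i : Fin n, P (EuclideanSpace.single (Sum.inl i) 1) = J (T (g i)) := by
  have : FiniteDimensional ℂ H := g.toBasis.finiteDimensional_of_finite
  obtain ⟨v, hv⟩ := exists_norm_adjoint_apply_sq_add_sum_eq
    ((finrank_eq_card_basis g.toBasis).trans (Fintype.card_fin n)) hT
  have hu (x : H) : ∑ p, ‖⟪Sum.elim (fun i => T (g i)) v p, x⟫_ℂ‖ ^ 2 = ‖x‖ ^ 2 := by
    rw [Fintype.sum_sum_type, ← hv x, ← g.sum_sq_norm_inner_right (adjoint T x)]
    simp [adjoint_inner_right]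
  let J := analysisIsometry _ hu
  exact ⟨J, (LinearMap.range J.toLinearMap).starProjection,
    Submodule.isIdempotentElem_starProjection _, isSelfAdjoint_starProjection _,
    Submodule.range_starProjection _,
    fun i => starProjection_range_analysisIsometry_single (Sum.inl i)⟩
end

section
/- Suppose λ₁,...,λ_N are distinct real numbers with |λ_m - λ_n| ≥ δ > 0 for m ≠ n. Then for any complex coefficients a₁,...,a_N and any T > 0, ∫₀^T |Σ_{n=1}^N a_n e^{2πiλ_n t}|² dt = (T + θ/δ) Σ_{n=1}^N |a_n|² for some θ with -1 ≤ θ ≤ 1. -/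
/-!
Expanding the square and integrating term by term, the diagonal contributes `T ∑ |a_n|²` and
the off-diagonal terms give `(2πi)⁻¹ (H(b) - H(a))`, where `b_n = a_n e(λ_n T)` and
`H(u) = ∑_{r ≠ s} u_r ū_s / (λ_r - λ_s)`. As `|b_n| = |a_n|`, everything rests on the
Montgomery–Vaughan form of Hilbert's inequality `|H(u)| ≤ (π / δ) ∑ |u_n|²`.

The matrix `-i / (λ_r - λ_s)` is Hermitian, so it suffices to bound its eigenvalues. For an
eigenvector `z` with eigenvalue `μ`, the partial fraction identity
`1 / ((λ_r - λ_s)(λ_r - λ_t)) = (1 / (λ_s - λ_t)) (1 / (λ_r - λ_s) - 1 / (λ_r - λ_t))`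
turns `μ² ∑ |z_s|²` into `∑_s Q_s |z_s|² + 2 Re ∑_{s,t} z_s z̄_t / (λ_s - λ_t)²` (the remaining
cross terms cancel for an eigenvector), where `Q_s = ∑_{r ≠ s} (λ_r - λ_s)⁻²`. By AM-GM the last
sum is at most `∑_s Q_s |z_s|²`, and separation gives `Q_s ≤ 2 ζ(2) / δ² = π² / (3 δ²)`, so
`μ² ≤ π² / δ²`.
-/

open scoped Real ComplexConjugate
open Finset

section Separated

variable {δ : ℝ} {F : Finset ℝ}

lemma succ_mul_le_orderEmbOfFin (hpos : ∀ x ∈ F, δ ≤ x)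
    (hsep : (F : Set ℝ).Pairwise fun x y => δ ≤ |x - y|) {k : ℕ} (hk : #F = k) (i : Fin k) :
    (i + 1 : ℝ) * δ ≤ F.orderEmbOfFin hk i := by
  obtain ⟨n, hn⟩ := i
  induction n with
  | zero => simpa using hpos _ (F.orderEmbOfFin_mem hk _)
  | succ n ih =>
    have hlt : F.orderEmbOfFin hk ⟨n, by omega⟩ < F.orderEmbOfFin hk ⟨n + 1, hn⟩ :=
      (F.orderEmbOfFin hk).strictMono (Fin.mk_lt_mk.mpr n.lt_succ_self)
    have hgap : δ ≤ |_ - _| :=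
      hsep (F.orderEmbOfFin_mem hk _) (F.orderEmbOfFin_mem hk _) hlt.ne'
    rw [abs_of_pos (sub_pos.mpr hlt)] at hgap
    push_cast
    linarith [ih (by omega)]

lemma sum_inv_sq_le_of_le_of_separated (hδ : 0 < δ) (hpos : ∀ x ∈ F, δ ≤ x)
    (hsep : (F : Set ℝ).Pairwise fun x y => δ ≤ |x - y|) :
    ∑ x ∈ F, x⁻¹ ^ 2 ≤ π ^ 2 / 6 / δ ^ 2 := by
  set x := F.orderEmbOfFin rfl
  have hzeta : ∑ i ∈ range #F, 1 / ((i : ℝ) + 1) ^ 2 ≤ π ^ 2 / 6 := by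
    have := sum_le_hasSum (range (#F + 1)) (fun i _ => by positivity) hasSum_zeta_two
    rw [sum_range_succ'] at this
    simpa using this
  calc ∑ y ∈ F, y⁻¹ ^ 2 = ∑ i, (x i)⁻¹ ^ 2 := by
        conv_lhs => rw [← F.image_orderEmbOfFin_univ rfl]
        exact sum_image x.injective.injOn
    _ ≤ ∑ i : Fin #F, ((i + 1 : ℝ) * δ)⁻¹ ^ 2 := by
        gcongr with i
        all_goals have hi := succ_mul_le_orderEmbOfFin hpos hsep rfl i
        · exact inv_nonneg.mpr ((by positivity : (0 : ℝ) ≤ (i + 1) * δ).trans hi)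
        · exact hi
    _ = (∑ i ∈ range #F, 1 / ((i : ℝ) + 1) ^ 2) / δ ^ 2 := by
        rw [Fin.sum_univ_eq_sum_range (fun i => ((i + 1 : ℝ) * δ)⁻¹ ^ 2), sum_div]
        congr! 1 with i
        field_simp
    _ ≤ π ^ 2 / 6 / δ ^ 2 := by gcongr

lemma sum_inv_sq_le_of_le_abs_of_separated (hδ : 0 < δ) (habs : ∀ x ∈ F, δ ≤ |x|)
    (hsep : (F : Set ℝ).Pairwise fun x y => δ ≤ |x - y|) :
    ∑ x ∈ F, x⁻¹ ^ 2 ≤ π ^ 2 / 3 / δ ^ 2 := by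
  rw [← sum_filter_add_sum_filter_not F (0 < ·)]
  have hpos : ∑ x ∈ F with 0 < x, x⁻¹ ^ 2 ≤ π ^ 2 / 6 / δ ^ 2 := by
    refine sum_inv_sq_le_of_le_of_separated hδ (fun x hx => ?_)
      (hsep.mono (coe_subset.mpr (filter_subset _ _)))
    rw [mem_filter] at hx
    simpa [abs_of_pos hx.2] using habs x hx.1
  have hneg : ∑ x ∈ F with ¬0 < x, x⁻¹ ^ 2 ≤ π ^ 2 / 6 / δ ^ 2 := by
    have := sum_image (f := fun x : ℝ => x⁻¹ ^ 2) (s := F.filter (¬0 < ·))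
      neg_injective.injOn
    simp only [inv_neg, neg_sq] at this
    rw [← this]
    refine sum_inv_sq_le_of_le_of_separated hδ ?_ ?_
    · simp only [mem_image, mem_filter, not_lt]
      rintro _ ⟨x, ⟨hx, hx0⟩, rfl⟩
      simpa [abs_of_nonpos hx0] using habs x hx
    · rw [coe_image]
      refine Set.Pairwise.image fun x hx y hy hxy => ?_
      simpa [Function.onFun, neg_add_eq_sub, abs_sub_comm] using
        hsep (filter_subset _ _ hx) (filter_subset _ _ hy) hxy
  linarith [show π ^ 2 / 3 / δ ^ 2 = 2 * (π ^ 2 / 6 / δ ^ 2) by ring]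

end Separated

lemma inv_sub_mul_inv_sub {K : Type*} [Field K] {x y z : K} (hxy : x ≠ y) (hxz : x ≠ z)
    (hyz : y ≠ z) : (x - y)⁻¹ * (x - z)⁻¹ = (y - z)⁻¹ * ((x - y)⁻¹ - (x - z)⁻¹) := by
  have := sub_ne_zero.mpr hxy
  have := sub_ne_zero.mpr hxz
  have := sub_ne_zero.mpr hyz
  field_simp
  ring

lemma sum_sum_mul_mul_le_sum_mul_sq {ι : Type*} [Fintype ι] {K : ι → ι → ℝ}
    (hK : ∀ s t, K s t = K t s) (hK₀ : ∀ s t, 0 ≤ K s t) (x : ι → ℝ) :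
    ∑ s, ∑ t, K s t * x s * x t ≤ ∑ s, (∑ t, K s t) * x s ^ 2 := by
  have hswap : ∑ s, ∑ t, K s t * x t ^ 2 = ∑ s, ∑ t, K s t * x s ^ 2 := by
    rw [sum_comm]; simp only [hK]
  have hamgm : ∀ s t, 2 * (K s t * x s * x t) ≤ K s t * x s ^ 2 + K s t * x t ^ 2 := fun s t => by
    nlinarith [mul_nonneg (hK₀ s t) (sq_nonneg (x s - x t))]
  have := sum_le_sum fun s (_ : s ∈ univ) => sum_le_sum fun t (_ : t ∈ univ) => hamgm s t
  simp only [← mul_sum, sum_add_distrib, hswap] at this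
  simp only [sum_mul]
  linarith

lemma LinearMap.IsSymmetric.norm_inner_self_le {𝕜 E : Type*} [RCLike 𝕜] [NormedAddCommGroup E]
    [InnerProductSpace 𝕜 E] [FiniteDimensional 𝕜 E] {T : E →ₗ[𝕜] E} (hT : T.IsSymmetric)
    {C : ℝ} (hC : ∀ μ : ℝ, Module.End.HasEigenvalue T μ → |μ| ≤ C) (x : E) :
    ‖inner 𝕜 x (T x)‖ ≤ C * ‖x‖ ^ 2 := by
  set b := hT.eigenvectorBasis rfl
  have hdiag : inner 𝕜 x (T x) =
      ∑ i, (hT.eigenvalues rfl i : 𝕜) * (conj (b.repr x i) * b.repr x i) := by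
    rw [← b.repr.inner_map_map, PiLp.inner_apply]
    refine sum_congr rfl fun i _ => ?_
    rw [hT.eigenvectorBasis_apply_self_apply, RCLike.inner_apply]
    ring
  calc ‖inner 𝕜 x (T x)‖
      ≤ ∑ i, |hT.eigenvalues rfl i| * ‖b.repr x i‖ ^ 2 := by
        rw [hdiag]
        refine (norm_sum_le _ _).trans_eq (sum_congr rfl fun i _ => ?_)
        rw [norm_mul, norm_mul, RCLike.norm_conj, RCLike.norm_ofReal, sq]
    _ ≤ ∑ i, C * ‖b.repr x i‖ ^ 2 := by
        gcongr with i
        exact hC _ (hT.hasEigenvalue_eigenvalues rfl i)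
    _ = C * ‖x‖ ^ 2 := by rw [← mul_sum, ← EuclideanSpace.norm_sq_eq, b.repr.norm_map]

section HilbertKernel

/- Since `(λ_r - λ_r)⁻¹ = 0`, sums over all `r` of the kernel `(λ_r - λ_s)⁻¹` are the sums over
`r ≠ s` of the paper. -/

variable {ι : Type*} {lam : ι → ℝ} {δ : ℝ}

lemma Pairwise.injective_of_le_abs_sub (hδ : 0 < δ)
    (hsep : Pairwise fun r s => δ ≤ |lam r - lam s|) : Function.Injective lam := fun r s h => by
  by_contra hrs
  have : δ ≤ |lam r - lam s| := hsep hrs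
  rw [h, sub_self, abs_zero] at this
  linarith

lemma inv_sub_mul_inv_sub_eq [DecidableEq ι] (hinj : Function.Injective lam) {s t : ι}
    (hst : s ≠ t) (r : ι) :
    (lam r - lam s)⁻¹ * (lam r - lam t)⁻¹ =
      (lam s - lam t)⁻¹ * ((lam r - lam s)⁻¹ - (lam r - lam t)⁻¹) +
        ((if r = s then (lam s - lam t)⁻¹ ^ 2 else 0) +
          if r = t then (lam s - lam t)⁻¹ ^ 2 else 0) := by
  by_cases hrs : r = s
  · subst hrs
    simp only [sub_self, inv_zero, zero_mul, if_true, hst, if_false, add_zero]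
    ring
  by_cases hrt : r = t
  · subst hrt
    simp only [sub_self, inv_zero, mul_zero, sub_zero, if_true, hrs, if_false, zero_add]
    rw [← neg_sub (lam r), inv_neg]
    ring
  simp only [hrs, hrt, if_false, add_zero]
  exact inv_sub_mul_inv_sub (hinj.ne hrs) (hinj.ne hrt) (hinj.ne hst)

variable [Fintype ι]

lemma sum_inv_sub_sq_le (hδ : 0 < δ) (hsep : Pairwise fun r s => δ ≤ |lam r - lam s|) (s : ι) :
    ∑ r, (lam r - lam s)⁻¹ ^ 2 ≤ π ^ 2 / 3 / δ ^ 2 := by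
  classical
  have hinj := hsep.injective_of_le_abs_sub hδ
  rw [← sum_erase univ (a := s) (by simp)]
  have himage := sum_image (f := fun x : ℝ => x⁻¹ ^ 2) (s := univ.erase s)
    (g := fun r => lam r - lam s) fun r _ r' _ h => hinj (by simpa using h)
  rw [← himage]
  refine sum_inv_sq_le_of_le_abs_of_separated hδ ?_ ?_
  · simp only [mem_image, mem_erase]
    rintro _ ⟨r, ⟨hrs, -⟩, rfl⟩
    exact hsep hrs
  · rw [coe_image]
    refine Set.Pairwise.image fun r _ r' _ hrr' => ?_
    simpa [Function.onFun] using hsep hrr'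

lemma sum_inv_sub_mul_inv_sub [DecidableEq ι] (hinj : Function.Injective lam) (s t : ι) :
    ∑ r, (lam r - lam s)⁻¹ * (lam r - lam t)⁻¹ =
      (if s = t then ∑ r, (lam r - lam s)⁻¹ ^ 2 else 0) +
        (lam s - lam t)⁻¹ * (∑ r, (lam r - lam s)⁻¹ - ∑ r, (lam r - lam t)⁻¹) +
          2 * (lam s - lam t)⁻¹ ^ 2 := by
  by_cases hst : s = t
  · subst hst; simp [sq]
  simp only [inv_sub_mul_inv_sub_eq hinj hst, sum_add_distrib, ← mul_sum, sum_sub_distrib,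
    sum_ite_eq', mem_univ, if_true, hst, if_false]
  ring

lemma sum_sq_sum_inv_sub_mul (hinj : Function.Injective lam) (x : ι → ℝ) :
    ∑ r, (∑ s, (lam r - lam s)⁻¹ * x s) ^ 2 =
      ∑ s, (∑ r, (lam r - lam s)⁻¹ ^ 2) * x s ^ 2 +
        2 * ∑ s, (∑ r, (lam r - lam s)⁻¹) * x s * ∑ t, (lam s - lam t)⁻¹ * x t +
          2 * ∑ s, ∑ t, (lam s - lam t)⁻¹ ^ 2 * x s * x t := by
  classical
  have hexpand : ∑ r, (∑ s, (lam r - lam s)⁻¹ * x s) ^ 2 =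
      ∑ s, ∑ t, (∑ r, (lam r - lam s)⁻¹ * (lam r - lam t)⁻¹) * x s * x t := by
    simp only [sq, sum_mul_sum]
    simp only [sum_mul]
    rw [sum_comm]
    refine sum_congr rfl fun s _ => ?_
    rw [sum_comm]
    exact sum_congr rfl fun t _ => sum_congr rfl fun r _ => by ring
  have hswap : ∑ s, ∑ t, (lam s - lam t)⁻¹ * (∑ r, (lam r - lam t)⁻¹) * x s * x t =
      -∑ s, ∑ t, (lam s - lam t)⁻¹ * (∑ r, (lam r - lam s)⁻¹) * x s * x t := by
    rw [sum_comm, ← sum_neg_distrib]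
    refine sum_congr rfl fun s _ => ?_
    rw [← sum_neg_distrib]
    refine sum_congr rfl fun t _ => ?_
    rw [← neg_sub (lam s), inv_neg]
    ring
  have hmiddle : ∑ s, ∑ t, (lam s - lam t)⁻¹ * (∑ r, (lam r - lam s)⁻¹) * x s * x t =
      ∑ s, (∑ r, (lam r - lam s)⁻¹) * x s * ∑ t, (lam s - lam t)⁻¹ * x t :=
    sum_congr rfl fun s _ => by rw [mul_sum]; exact sum_congr rfl fun t _ => by ring
  have hlast : ∑ s, ∑ t, 2 * (lam s - lam t)⁻¹ ^ 2 * x s * x t =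
      2 * ∑ s, ∑ t, (lam s - lam t)⁻¹ ^ 2 * x s * x t := by
    simp only [mul_sum]
    exact sum_congr rfl fun s _ => sum_congr rfl fun t _ => by ring
  rw [hexpand]
  simp only [sum_inv_sub_mul_inv_sub hinj, add_mul, sub_mul, mul_sub, sum_add_distrib,
    sum_sub_distrib, ite_mul, zero_mul, sum_ite_eq, mem_univ, if_true]
  rw [hswap, hmiddle, hlast]
  simp only [mul_assoc, sq]
  ring

-- `hx` and `hy` say that `x + i y` is an eigenvector of `(λ_r - λ_s)⁻¹` with eigenvalue `i μ`.
lemma sq_mul_sum_le_of_hilbert_eigen (hinj : Function.Injective lam) {μ : ℝ} {x y : ι → ℝ}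
    (hx : ∀ r, ∑ s, (lam r - lam s)⁻¹ * x s = -(μ * y r))
    (hy : ∀ r, ∑ s, (lam r - lam s)⁻¹ * y s = μ * x r) :
    μ ^ 2 * ∑ s, (x s ^ 2 + y s ^ 2) ≤
      3 * ∑ s, (∑ r, (lam r - lam s)⁻¹ ^ 2) * (x s ^ 2 + y s ^ 2) := by
  have hK : ∀ s t, (lam s - lam t)⁻¹ ^ 2 = (lam t - lam s)⁻¹ ^ 2 := fun s t => by
    rw [← neg_sub (lam t), inv_neg, neg_sq]
  have hbound (z : ι → ℝ) : ∑ s, ∑ t, (lam s - lam t)⁻¹ ^ 2 * z s * z t ≤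
      ∑ s, (∑ r, (lam r - lam s)⁻¹ ^ 2) * z s ^ 2 := by
    refine (sum_sum_mul_mul_le_sum_mul_sq hK (fun _ _ => sq_nonneg _) z).trans_eq ?_
    exact sum_congr rfl fun s _ => by rw [sum_congr rfl fun t _ => hK s t]
  have ix := sum_sq_sum_inv_sub_mul hinj x
  have iy := sum_sq_sum_inv_sub_mul hinj y
  simp only [hx, hy] at ix iy
  have hcancel : ∑ s, (∑ r, (lam r - lam s)⁻¹) * x s * -(μ * y s) +
      ∑ s, (∑ r, (lam r - lam s)⁻¹) * y s * (μ * x s) = 0 := by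
    rw [← sum_add_distrib]; exact sum_eq_zero fun s _ => by ring
  have hx2 : ∑ r, (-(μ * y r)) ^ 2 = μ ^ 2 * ∑ r, y r ^ 2 := by
    rw [mul_sum]; exact sum_congr rfl fun r _ => by ring
  have hy2 : ∑ r, (μ * x r) ^ 2 = μ ^ 2 * ∑ r, x r ^ 2 := by
    rw [mul_sum]; exact sum_congr rfl fun r _ => by ring
  simp only [mul_add, sum_add_distrib]
  linarith [hbound x, hbound y]

lemma abs_le_of_hilbert_eigen (hδ : 0 < δ) (hsep : Pairwise fun r s => δ ≤ |lam r - lam s|)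
    {μ : ℝ} {v : ι → ℂ} (hv : v ≠ 0)
    (heig : ∀ r, ∑ s, ((lam r - lam s)⁻¹ : ℝ) * v s = Complex.I * μ * v r) :
    |μ| ≤ π / δ := by
  have hinj := hsep.injective_of_le_abs_sub hδ
  have hre : ∀ r, ∑ s, (lam r - lam s)⁻¹ * (v s).re = -(μ * (v r).im) := fun r => by
    have := congrArg Complex.re (heig r)
    simp only [Complex.re_sum, Complex.re_ofReal_mul] at this
    simp [this, Complex.mul_re]
  have him : ∀ r, ∑ s, (lam r - lam s)⁻¹ * (v s).im = μ * (v r).re := fun r => by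
    have := congrArg Complex.im (heig r)
    simp only [Complex.im_sum, Complex.im_ofReal_mul] at this
    simp [this, Complex.mul_im]
  have hpos : 0 < ∑ s, ((v s).re ^ 2 + (v s).im ^ 2) := by
    obtain ⟨s, hs⟩ := Function.ne_iff.mp hv
    refine sum_pos' (fun s _ => by positivity) ⟨s, mem_univ s, ?_⟩
    simpa [Complex.normSq_apply, sq] using Complex.normSq_pos.mpr hs
  have hQ : ∑ s, (∑ r, (lam r - lam s)⁻¹ ^ 2) * ((v s).re ^ 2 + (v s).im ^ 2) ≤
      π ^ 2 / 3 / δ ^ 2 * ∑ s, ((v s).re ^ 2 + (v s).im ^ 2) := by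
    rw [mul_sum]
    gcongr with s
    exact sum_inv_sub_sq_le hδ hsep s
  have hsq : μ ^ 2 ≤ (π / δ) ^ 2 := by
    refine le_of_mul_le_mul_right ?_ hpos
    have := sq_mul_sum_le_of_hilbert_eigen hinj hre him
    calc μ ^ 2 * _ ≤ _ := this
      _ ≤ 3 * (π ^ 2 / 3 / δ ^ 2 * ∑ s, ((v s).re ^ 2 + (v s).im ^ 2)) := by gcongr
      _ = _ := by ring
  exact abs_le_of_sq_le_sq hsq (by positivity)

noncomputable def hilbertForm (lam : ι → ℝ) (u : ι → ℂ) : ℂ :=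
  ∑ r, ∑ s, u r * conj (u s) * ((lam r - lam s)⁻¹ : ℝ)

theorem norm_hilbertForm_le (hδ : 0 < δ) (hsep : Pairwise fun r s => δ ≤ |lam r - lam s|)
    (u : ι → ℂ) : ‖hilbertForm lam u‖ ≤ π / δ * ∑ s, ‖u s‖ ^ 2 := by
  classical
  set M : Matrix ι ι ℂ := Matrix.of fun r s => -Complex.I * ((lam r - lam s)⁻¹ : ℝ)
  have hM : M.IsHermitian := by
    ext r s
    simp only [M, Matrix.conjTranspose_apply, Matrix.of_apply, star_mul', Complex.star_def,
      Complex.conj_ofReal, Complex.conj_I, map_neg]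
    rw [← neg_sub (lam r), inv_neg, Complex.ofReal_neg]
    ring
  have heig : ∀ μ : ℝ, Module.End.HasEigenvalue (Matrix.toEuclideanLin M) μ → |μ| ≤ π / δ := by
    intro μ hμ
    obtain ⟨v, hv⟩ := hμ.exists_hasEigenvector
    refine abs_le_of_hilbert_eigen hδ hsep (v := v.ofLp) (fun h => hv.2 ?_) fun r => ?_
    · simpa using congrArg (WithLp.toLp 2) h
    · have := congrArg (fun w => w.ofLp r) hv.apply_eq_smul
      simp only [Matrix.toLpLin_apply, Matrix.mulVec, dotProduct, M, Matrix.of_apply,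
        PiLp.smul_apply, smul_eq_mul] at this
      rw [mul_assoc, ← this, mul_sum]
      refine sum_congr rfl fun s _ => ?_
      linear_combination (((lam r - lam s)⁻¹ : ℝ) : ℂ) * v.ofLp s * Complex.I_mul_I
  have hform : inner ℂ (WithLp.toLp 2 u) (Matrix.toEuclideanLin M (WithLp.toLp 2 u)) =
      Complex.I * hilbertForm lam u := by
    simp only [hilbertForm, PiLp.inner_apply, Matrix.toLpLin_apply, Matrix.mulVec, dotProduct,
      M, Matrix.of_apply, RCLike.inner_apply, mul_sum, sum_mul]
    rw [sum_comm]
    refine sum_congr rfl fun s _ => sum_congr rfl fun r _ => ?_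
    rw [← neg_sub (lam s), inv_neg, Complex.ofReal_neg]
    ring
  have := (Matrix.isSymmetric_toEuclideanLin_iff.mpr hM).norm_inner_self_le heig (WithLp.toLp 2 u)
  rwa [hform, norm_mul, Complex.norm_I, one_mul, EuclideanSpace.norm_sq_eq] at this

end HilbertKernel

lemma exp_two_pi_I_mul_conj (x y t : ℝ) :
    Complex.exp (2 * π * Complex.I * x * t) * conj (Complex.exp (2 * π * Complex.I * y * t)) =
      Complex.exp (2 * π * Complex.I * ↑(x - y) * t) := by
  rw [← Complex.exp_conj, ← Complex.exp_add]
  congr 1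
  simp only [map_mul, map_ofNat, Complex.conj_ofReal, Complex.conj_I, Complex.ofReal_sub]
  ring

-- At `ν = 0` the second term vanishes because `0⁻¹ = 0`.
lemma integral_exp_two_pi_I_mul (ν T : ℝ) :
    ∫ t in (0 : ℝ)..T, Complex.exp (2 * π * Complex.I * ν * t) =
      (if ν = 0 then (T : ℂ) else 0) +
        (2 * π * Complex.I)⁻¹ * (ν⁻¹ : ℝ) * (Complex.exp (2 * π * Complex.I * ν * T) - 1) := by
  by_cases hν : ν = 0
  · simp [hν]
  have hc : 2 * π * Complex.I * ν ≠ 0 := by simp [hν, Real.pi_ne_zero]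
  rw [integral_exp_mul_complex hc, if_neg hν]
  push_cast
  field_simp
  simp

section MeanValue

variable {ι : Type*} [Fintype ι]

lemma ofReal_norm_sq_sum_exp (lam : ι → ℝ) (a : ι → ℂ) (t : ℝ) :
    ((‖∑ n, a n * Complex.exp (2 * π * Complex.I * lam n * t)‖ ^ 2 : ℝ) : ℂ) =
      ∑ m, ∑ n, a m * conj (a n) * Complex.exp (2 * π * Complex.I * ↑(lam m - lam n) * t) := by
  rw [Complex.ofReal_pow, ← Complex.mul_conj', map_sum, sum_mul_sum]
  refine sum_congr rfl fun m _ => sum_congr rfl fun n _ => ?_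
  rw [← exp_two_pi_I_mul_conj, map_mul]
  ring

lemma ofReal_integral_norm_sq_sum_exp {lam : ι → ℝ} (hinj : Function.Injective lam)
    (a : ι → ℂ) (T : ℝ) :
    ((∫ t in (0 : ℝ)..T, ‖∑ n, a n * Complex.exp (2 * π * Complex.I * lam n * t)‖ ^ 2 : ℝ) : ℂ) =
      ((T * ∑ n, ‖a n‖ ^ 2 : ℝ) : ℂ) + (2 * π * Complex.I)⁻¹ *
        (hilbertForm lam (fun n => a n * Complex.exp (2 * π * Complex.I * lam n * T)) -
          hilbertForm lam a) := by
  classical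
  set e : ι → ℝ → ℂ := fun m t => a m * Complex.exp (2 * π * Complex.I * lam m * t)
  have hterm (m n : ι) : ∫ t in (0 : ℝ)..T,
      a m * conj (a n) * Complex.exp (2 * π * Complex.I * ↑(lam m - lam n) * t) =
      (if m = n then a m * conj (a n) * T else 0) +
        (2 * π * Complex.I)⁻¹ * (e m T * conj (e n T) - a m * conj (a n)) *
          ((lam m - lam n)⁻¹ : ℝ) := by
    rw [intervalIntegral.integral_const_mul, integral_exp_two_pi_I_mul]
    simp only [sub_eq_zero, hinj.eq_iff, e, map_mul, ← exp_two_pi_I_mul_conj]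
    split_ifs <;> ring
  have hcont (m n : ι) : Continuous fun t : ℝ =>
      a m * conj (a n) * Complex.exp (2 * π * Complex.I * ↑(lam m - lam n) * t) := by
    fun_prop
  rw [← intervalIntegral.integral_ofReal]
  simp_rw [ofReal_norm_sq_sum_exp]
  rw [intervalIntegral.integral_finsetSum fun m _ =>
    (continuous_finsetSum _ fun n _ => hcont m n).intervalIntegrable _ _]
  rw [sum_congr rfl fun m _ => intervalIntegral.integral_finsetSum fun n _ =>
    (hcont m n).intervalIntegrable _ _]
  simp only [hterm, sum_add_distrib, sum_ite_eq, mem_univ, if_true]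
  congr 1
  · push_cast
    rw [mul_sum]
    exact sum_congr rfl fun n _ => by rw [Complex.mul_conj']; ring
  · simp only [hilbertForm, e, ← sum_sub_distrib, mul_sum]
    exact sum_congr rfl fun m _ => sum_congr rfl fun n _ => by ring

end MeanValue

lemma exists_eq_add_div_mul_of_abs_sub_le {x T S δ : ℝ} (hδ : 0 < δ)
    (h : |x - T * S| ≤ S / δ) : ∃ θ : ℝ, -1 ≤ θ ∧ θ ≤ 1 ∧ x = (T + θ / δ) * S := by
  have hS : 0 ≤ S := by
    by_contra! hS
    linarith [abs_nonneg (x - T * S), div_neg_of_neg_of_pos hS hδ]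
  rcases hS.eq_or_lt with rfl | hS
  · exact ⟨0, by norm_num, by norm_num, by simpa using h⟩
  obtain ⟨hlo, hhi⟩ := abs_le.mp h
  rw [← neg_div, div_le_iff₀ hδ] at hlo
  rw [le_div_iff₀ hδ] at hhi
  refine ⟨δ * (x - T * S) / S, ?_, ?_, ?_⟩
  · rw [le_div_iff₀ hS]; linarith
  · rw [div_le_one hS]; linarith
  · field_simp
    ring

theorem montgomery_vaughan_general
    (N : ℕ) (lam : Fin N → ℝ) (δ : ℝ) (hδ : 0 < δ)
    (hsep : ∀ m n : Fin N, m ≠ n → δ ≤ |lam m - lam n|)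
    (a : Fin N → ℂ) (T : ℝ) :
    ∃ θ : ℝ, -1 ≤ θ ∧ θ ≤ 1 ∧
      ∫ t in (0 : ℝ)..T,
          ‖∑ n, a n * Complex.exp (2 * π * Complex.I * (lam n) * t)‖ ^ 2
        = (T + θ / δ) * ∑ n, ‖a n‖ ^ 2 := by
  set b : Fin N → ℂ := fun n => a n * Complex.exp (2 * π * Complex.I * lam n * T)
  have hb : ∑ n, ‖b n‖ ^ 2 = ∑ n, ‖a n‖ ^ 2 := by simp [b, Complex.norm_exp]
  refine exists_eq_add_div_mul_of_abs_sub_le hδ ?_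
  rw [← Real.norm_eq_abs, ← Complex.norm_real, Complex.ofReal_sub,
    ofReal_integral_norm_sq_sum_exp (Pairwise.injective_of_le_abs_sub hδ hsep),
    add_sub_cancel_left]
  calc ‖(2 * π * Complex.I)⁻¹ * (hilbertForm lam b - hilbertForm lam a)‖
      ≤ (2 * π)⁻¹ * (π / δ * ∑ n, ‖b n‖ ^ 2 + π / δ * ∑ n, ‖a n‖ ^ 2) := by
        rw [norm_mul, show ‖(2 * π * Complex.I)⁻¹‖ = (2 * π)⁻¹ by simp [Real.pi_pos.le]]
        gcongr
        exact (norm_sub_le _ _).trans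
          (add_le_add (norm_hilbertForm_le hδ hsep b) (norm_hilbertForm_le hδ hsep a))
    _ = (∑ n, ‖a n‖ ^ 2) / δ := by
        rw [hb]
        field_simp
        ring

/-- The Montgomery–Vaughan mean value estimate: if `λ₁,…,λ_N` are real numbers
with `|λ_m - λ_n| ≥ δ > 0` for `m ≠ n`, then for any coefficients `a_n` and any
`T > 0`, `∫₀^T |Σ a_n e^{2πiλ_n t}|² dt = (T + θ/δ) Σ |a_n|²` for some `θ ∈ [-1,1]`. -/
theorem montgomery_vaughan
    (N : ℕ) (lam : Fin N → ℝ) (δ : ℝ) (hδ : 0 < δ)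
    (hsep : ∀ m n : Fin N, m ≠ n → δ ≤ |lam m - lam n|)
    (a : Fin N → ℂ) (T : ℝ) (hT : 0 < T) :
    ∃ θ : ℝ, -1 ≤ θ ∧ θ ≤ 1 ∧
      ∫ t in (0 : ℝ)..T,
          ‖∑ n, a n * Complex.exp (2 * π * Complex.I * (lam n) * t)‖ ^ 2
        = (T + θ / δ) * ∑ n, ‖a n‖ ^ 2 :=
  montgomery_vaughan_general N lam δ hδ hsep a T
end

section
/- For any g ∈ L^∞([0,1]), there is an increasing sequence of natural numbers {K_n} such that (1/K_n) Σ_{k=0}^{K_n - 1} |g(t - k/K_n)|² → ‖g‖²_{L²} almost everywhere on [0,1] as n → ∞ (with translation mod 1). -/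
noncomputable section

open MeasureTheory Filter
open scoped ENNReal Real Topology

instance : Fact ((0 : ℝ) < 1) := ⟨one_pos⟩

/-- Haar (Lebesgue) probability measure on the circle `[0,1)`. -/
abbrev μ01 : Measure (AddCircle (1 : ℝ)) := AddCircle.haarAddCircle

/-!
The averages `A_K f (t) = (1/K) Σ_{k<K} f (t - k/K)` converge to `∫ f` in `L¹` for every
integrable `f`: each `A_K` is an average of measure-preserving translates, hence an `L¹`
contraction, and for continuous `f` the averages are Riemann sums of `x ↦ f (t - x)` over `[0,1]`,
converging uniformly in `t`. Convergence in `L¹` gives convergence in measure, hence almost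
everywhere convergence along a subsequence; apply this to `f = |g|²`, integrable since
`L^∞ ⊆ L²` on a probability space.
-/

section

variable {E : Type*} [NormedAddCommGroup E]

theorem TendstoUniformly.tendsto_eLpNorm_sub {α ι : Type*} [MeasurableSpace α] {μ : Measure α}
    [IsProbabilityMeasure μ] {l : Filter ι} {F : ι → α → E} {f : α → E}
    (h : TendstoUniformly F f l) (p : ℝ≥0∞) :
    Tendsto (fun i => eLpNorm (F i - f) p μ) l (𝓝 0) := by
  refine ENNReal.tendsto_nhds_zero.2 fun ε hε => ?_
  obtain ⟨r, -, hr0, hrε⟩ := ENNReal.lt_iff_exists_real_btwn.1 hε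
  filter_upwards [Metric.tendstoUniformly_iff.1 h r (ENNReal.ofReal_pos.1 hr0)] with i hi
  calc eLpNorm (F i - f) p μ ≤ μ Set.univ ^ p.toReal⁻¹ * ENNReal.ofReal r :=
        eLpNorm_le_of_ae_bound (ae_of_all _ fun x => by
          simpa [dist_eq_norm', norm_sub_rev] using (hi x).le)
    _ ≤ ε := by simpa using hrε.le

theorem enorm_one_div_natCast_mul_le_one (K : ℕ) : ‖(1 / (K : ℝ))‖ₑ * K ≤ 1 := by
  rcases K.eq_zero_or_pos with rfl | hK
  · simp
  · rw [one_div, enorm_inv (by positivity)]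
    simp

variable [NormedSpace ℝ E]

def riemannAvg (K : ℕ) (f : AddCircle (1 : ℝ) → E) (t : AddCircle (1 : ℝ)) : E :=
  (1 / (K : ℝ)) • ∑ k ∈ Finset.range K, f (t - (((k : ℝ) / (K : ℝ) : ℝ) : AddCircle (1 : ℝ)))

theorem riemannAvg_eq_smul_sum (K : ℕ) (f : AddCircle (1 : ℝ) → E) :
    riemannAvg K f = (1 / (K : ℝ)) • ∑ k ∈ Finset.range K,
      fun t => f (t - (((k : ℝ) / (K : ℝ) : ℝ) : AddCircle (1 : ℝ))) := by
  ext t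
  simp only [riemannAvg, Pi.smul_apply, Finset.sum_apply]

theorem riemannAvg_sub (K : ℕ) (f g : AddCircle (1 : ℝ) → E) :
    riemannAvg K (f - g) = riemannAvg K f - riemannAvg K g := by
  ext t
  simp only [riemannAvg, Pi.sub_apply, Finset.sum_sub_distrib, smul_sub]

section Invariant

variable {μ : Measure (AddCircle (1 : ℝ))} [μ.IsAddRightInvariant] {f : AddCircle (1 : ℝ) → E}

theorem MeasureTheory.AEStronglyMeasurable.riemannAvg (hf : AEStronglyMeasurable f μ) (K : ℕ) :
    AEStronglyMeasurable (riemannAvg K f) μ :=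
  (Finset.aestronglyMeasurable_fun_sum _ fun _ _ =>
    hf.comp_measurePreserving (measurePreserving_sub_right μ _)).const_smul _

theorem eLpNorm_riemannAvg_le {p : ℝ≥0∞} (hp : 1 ≤ p) (hf : AEStronglyMeasurable f μ) (K : ℕ) :
    eLpNorm (riemannAvg K f) p μ ≤ eLpNorm f p μ := by
  have htranslate (c : AddCircle (1 : ℝ)) : eLpNorm (fun t => f (t - c)) p μ = eLpNorm f p μ :=
    eLpNorm_comp_measurePreserving hf (measurePreserving_sub_right μ c)
  calc eLpNorm (riemannAvg K f) p μ
      ≤ ‖(1 / (K : ℝ))‖ₑ * ∑ k ∈ Finset.range K,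
          eLpNorm (fun t => f (t - (((k : ℝ) / (K : ℝ) : ℝ) : AddCircle (1 : ℝ)))) p μ := by
        rw [riemannAvg_eq_smul_sum]
        exact eLpNorm_const_smul_le.trans (mul_le_mul_right (eLpNorm_sum_le (fun _ _ =>
          hf.comp_measurePreserving (measurePreserving_sub_right μ _)) hp) _)
    _ = ‖(1 / (K : ℝ))‖ₑ * K * eLpNorm f p μ := by
        simp only [htranslate, Finset.sum_const, Finset.card_range, nsmul_eq_mul, mul_assoc]
    _ ≤ eLpNorm f p μ := mul_le_of_le_one_left zero_le (enorm_one_div_natCast_mul_le_one K)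

theorem eLpNorm_riemannAvg_sub_integral_le [IsProbabilityMeasure μ]
    (hf : AEStronglyMeasurable f μ) (K : ℕ) :
    eLpNorm (riemannAvg K f - fun _ => ∫ s, f s ∂μ) 1 μ ≤ 2 * eLpNorm f 1 μ := by
  have hconst : eLpNorm (fun _ : AddCircle (1 : ℝ) => ∫ s, f s ∂μ) 1 μ ≤ eLpNorm f 1 μ := by
    rw [eLpNorm_const _ one_ne_zero (NeZero.ne μ), measure_univ, ENNReal.one_rpow, mul_one,
      eLpNorm_one_eq_lintegral_enorm]
    exact enorm_integral_le_lintegral_enorm f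
  calc _ ≤ eLpNorm (riemannAvg K f) 1 μ + eLpNorm (fun _ => ∫ s, f s ∂μ) 1 μ :=
        eLpNorm_sub_le (hf.riemannAvg K) aestronglyMeasurable_const le_rfl
    _ ≤ eLpNorm f 1 μ + eLpNorm f 1 μ := add_le_add (eLpNorm_riemannAvg_le le_rfl hf K) hconst
    _ = 2 * eLpNorm f 1 μ := (two_mul _).symm

end Invariant

theorem integral_haarAddCircle_eq_intervalIntegral_sub (f : AddCircle (1 : ℝ) → E)
    (t : AddCircle (1 : ℝ)) :
    ∫ s, f s ∂μ01 = ∫ x in (0 : ℝ)..1, f (t - x) := by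
  have hvol : (volume : Measure (AddCircle (1 : ℝ))) = μ01 := by
    simp [AddCircle.volume_eq_smul_haarAddCircle]
  rw [← integral_sub_left_eq_self f μ01 t, ← hvol,
    ← AddCircle.intervalIntegral_preimage 1 0 fun s => f (t - s), zero_add]

variable [CompleteSpace E]

theorem norm_riemannSum_sub_intervalIntegral_le {ψ : ℝ → E} (hψ : Continuous ψ) {K : ℕ}
    (hK : 0 < K) {ε : ℝ} (hε : ∀ x y, |x - y| ≤ 1 / (K : ℝ) → ‖ψ x - ψ y‖ ≤ ε) :
    ‖(1 / (K : ℝ)) • ∑ k ∈ Finset.range K, ψ (k / K) - ∫ x in (0 : ℝ)..1, ψ x‖ ≤ ε := by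
  set a : ℕ → ℝ := fun k => k / K
  have hK' : (0 : ℝ) < K := Nat.cast_pos.2 hK
  have hstep (k : ℕ) : a (k + 1) - a k = 1 / K := by
    simp only [a]; push_cast; ring
  have hsplit : ∫ x in (0 : ℝ)..1, ψ x = ∑ k ∈ Finset.range K, ∫ x in a k..a (k + 1), ψ x := by
    rw [intervalIntegral.sum_integral_adjacent_intervals fun k _ => hψ.intervalIntegrable _ _]
    simp [a, hK'.ne']
  have hpiece (k : ℕ) :
      (1 / (K : ℝ)) • ψ (a k) - ∫ x in a k..a (k + 1), ψ x
        = ∫ x in a k..a (k + 1), (ψ (a k) - ψ x) := by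
    rw [intervalIntegral.integral_sub intervalIntegrable_const (hψ.intervalIntegrable _ _),
      intervalIntegral.integral_const, hstep]
  have hpiece_le (k : ℕ) : ‖∫ x in a k..a (k + 1), (ψ (a k) - ψ x)‖ ≤ ε / K := by
    have hle : a k ≤ a (k + 1) := by linarith [hstep k, one_div_pos.2 hK']
    calc _ ≤ ε * |a (k + 1) - a k| := by
          refine intervalIntegral.norm_integral_le_of_norm_le_const fun x hx => hε _ _ ?_
          rw [Set.uIoc_of_le hle] at hx
          rw [abs_le]
          constructor <;> linarith [hx.1, hx.2, hstep k]
      _ = ε / K := by rw [hstep, abs_of_pos (one_div_pos.2 hK')]; ring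
  calc _ = ‖∑ k ∈ Finset.range K, ∫ x in a k..a (k + 1), (ψ (a k) - ψ x)‖ := by
        rw [hsplit, Finset.smul_sum, ← Finset.sum_sub_distrib]
        exact congrArg _ (Finset.sum_congr rfl fun k _ => hpiece k)
    _ ≤ ∑ _k ∈ Finset.range K, ε / K := norm_sum_le_of_le _ fun k _ => hpiece_le k
    _ = ε := by
        rw [Finset.sum_const, Finset.card_range, nsmul_eq_mul]
        field_simp

theorem tendstoUniformly_riemannAvg {φ : AddCircle (1 : ℝ) → E} (hφ : Continuous φ) :
    TendstoUniformly (fun K => riemannAvg K φ) (fun _ => ∫ s, φ s ∂μ01) atTop := by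
  rw [Metric.tendstoUniformly_iff]
  intro ε hε
  obtain ⟨δ, hδ, hφδ⟩ := Metric.uniformContinuous_iff.1
    (CompactSpace.uniformContinuous_of_continuous hφ) (ε / 2) (half_pos hε)
  filter_upwards [eventually_gt_atTop 0, eventually_gt_atTop ⌈1 / δ⌉₊] with K hK hKδ t
  have hmesh : 1 / (K : ℝ) < δ := by
    rw [div_lt_iff₀ (Nat.cast_pos.2 hK), mul_comm, ← div_lt_iff₀ hδ]
    exact Nat.lt_of_ceil_lt hKδ
  rw [dist_comm, dist_eq_norm, integral_haarAddCircle_eq_intervalIntegral_sub φ t]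
  refine lt_of_le_of_lt (norm_riemannSum_sub_intervalIntegral_le (ψ := fun x : ℝ => φ (t - x))
    (by fun_prop) hK fun x y hxy => ?_) (half_lt_self hε)
  rw [← dist_eq_norm]
  refine (hφδ ?_).le
  rw [dist_sub_left]
  calc dist (x : AddCircle (1 : ℝ)) y = ‖((x - y : ℝ) : AddCircle (1 : ℝ))‖ := by
        rw [dist_eq_norm, AddCircle.coe_sub]
    _ ≤ |x - y| := QuotientAddGroup.norm_mk_le_norm
    _ < δ := hxy.trans_lt hmesh

theorem tendsto_eLpNorm_riemannAvg_sub_integral {f : AddCircle (1 : ℝ) → E}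
    (hf : Integrable f μ01) :
    Tendsto (fun K => eLpNorm (riemannAvg K f - fun _ => ∫ s, f s ∂μ01) 1 μ01) atTop (𝓝 0) := by
  refine ENNReal.tendsto_nhds_zero.2 fun ε hε => ?_
  have hε2 : 0 < ε / 2 := ENNReal.half_pos hε.ne'
  obtain ⟨φ, hfφ, hφ⟩ := (memLp_one_iff_integrable.2 hf).exists_boundedContinuous_eLpNorm_sub_le
    ENNReal.one_ne_top (ENNReal.half_pos hε2.ne').ne'
  filter_upwards [ENNReal.tendsto_nhds_zero.1
    ((tendstoUniformly_riemannAvg φ.continuous).tendsto_eLpNorm_sub (μ := μ01) 1) _ hε2] with K hK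
  have hsplit : riemannAvg K f - (fun _ => ∫ s, f s ∂μ01)
      = (riemannAvg K (f - ⇑φ) - fun _ => ∫ s, (f - ⇑φ) s ∂μ01)
        + (riemannAvg K φ - fun _ => ∫ s, φ s ∂μ01) := by
    rw [riemannAvg_sub, integral_sub' hf (memLp_one_iff_integrable.1 hφ)]
    ext t
    simp only [Pi.add_apply, Pi.sub_apply]
    abel
  calc eLpNorm (riemannAvg K f - fun _ => ∫ s, f s ∂μ01) 1 μ01
      ≤ eLpNorm (riemannAvg K (f - ⇑φ) - fun _ => ∫ s, (f - ⇑φ) s ∂μ01) 1 μ01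
        + eLpNorm (riemannAvg K φ - fun _ => ∫ s, φ s ∂μ01) 1 μ01 := by
        rw [hsplit]
        exact eLpNorm_add_le
          (((hf.1.sub hφ.1).riemannAvg K).sub aestronglyMeasurable_const)
          ((hφ.1.riemannAvg K).sub aestronglyMeasurable_const) le_rfl
    _ ≤ 2 * (ε / 2 / 2) + ε / 2 := add_le_add
        ((eLpNorm_riemannAvg_sub_integral_le (hf.1.sub hφ.1) K).trans (by gcongr)) hK
    _ = ε := by rw [two_mul, ENNReal.add_halves, ENNReal.add_halves]

theorem exists_strictMono_ae_tendsto_riemannAvg {f : AddCircle (1 : ℝ) → E}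
    (hf : Integrable f μ01) :
    ∃ K : ℕ → ℕ, StrictMono K ∧
      ∀ᵐ t ∂μ01, Tendsto (fun n => riemannAvg (K n) f t) atTop (𝓝 (∫ s, f s ∂μ01)) :=
  (tendstoInMeasure_of_tendsto_eLpNorm one_ne_zero (fun K => hf.1.riemannAvg K)
    aestronglyMeasurable_const (tendsto_eLpNorm_riemannAvg_sub_integral hf)).exists_seq_tendsto_ae

end

theorem avg_translates_tendsto_norm_sq (g : Lp ℂ ∞ μ01) :
    ∃ K : ℕ → ℕ, StrictMono K ∧
      ∀ᵐ t ∂μ01,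
        Tendsto (fun n : ℕ =>
            (1 / (K n : ℝ)) * ∑ k ∈ Finset.range (K n),
              ‖(g : AddCircle (1 : ℝ) → ℂ)
                  (t - (((k : ℝ) / (K n : ℝ) : ℝ) : AddCircle (1 : ℝ)))‖ ^ 2)
          atTop (𝓝 (∫ s, ‖(g : AddCircle (1 : ℝ) → ℂ) s‖ ^ 2 ∂μ01)) := by
  have hg : Integrable (fun s => ‖(g : AddCircle (1 : ℝ) → ℂ) s‖ ^ 2) μ01 :=
    ((Lp.memLp g).mono_exponent le_top).integrable_norm_pow two_ne_zero
  exact exists_strictMono_ae_tendsto_riemannAvg hg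
end
end

section
/- Let {f_i}_{i=1}^M be unit-norm vectors in ℓ₂ⁿ forming a Bessel sequence with bound B, so that Σ_{m=1}^M |⟨f_i, f_m⟩|² ≤ B for each i. Fix S ∈ ℕ and δ > 0, and choose k with √(BS/k) ≤ δ. If {A_j}_{j=1}^r is a partition of {1,...,M} such that Σ_{m∈A_j, m≠i} |⟨f_i, f_m⟩|² ≤ B/k for all i ∈ A_j and all j, then for each j, every subset T ⊆ A_j with |T| ≤ S and all scalars {a_i}_{i∈T} satisfy (1-δ) Σ_{i∈T}|a_i|² ≤ ‖Σ_{i∈T} a_i f_i‖² ≤ (1+δ) Σ_{i∈T}|a_i|². -/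
/-! For unit vectors, `‖∑ a i • f i‖²` is `∑ ‖a i‖²` plus the real part of the off-diagonal Gram
form `∑_{i ≠ m} conj (a i) a m ⟪f i, f m⟫`. If `c` bounds the off-diagonal row sums of
`|⟪f i, f m⟫|²`, Cauchy–Schwarz in `m` bounds row `i` of this form by `‖a i‖ √(∑ ‖a m‖²) √c`, and
Cauchy–Schwarz in `i` gives `∑ ‖a i‖ ≤ √#T √(∑ ‖a i‖²)`; so the deviation is at most
`√#T √c ∑ ‖a i‖²`, and here `√#T √(B / k) ≤ √(B S / k) ≤ δ`. -/

open Finset RCLike ComplexConjugate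

section OffDiagonal

variable {𝕜 E ι : Type*} [RCLike 𝕜] [NormedAddCommGroup E] [InnerProductSpace 𝕜 E] [DecidableEq ι]

noncomputable def offDiagGramForm (f : ι → E) (T : Finset ι) (a : ι → 𝕜) : 𝕜 :=
  ∑ i ∈ T, ∑ m ∈ T.erase i, conj (a i) * a m * inner 𝕜 (f i) (f m)

theorem inner_sum_smul_self_eq (f : ι → E) (T : Finset ι) (a : ι → 𝕜) :
    inner 𝕜 (∑ i ∈ T, a i • f i) (∑ i ∈ T, a i • f i) =
      ∑ i ∈ T, ((‖a i‖ * ‖f i‖ : ℝ) : 𝕜) ^ 2 + offDiagGramForm f T a := by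
  simp_rw [sum_inner, inner_sum, inner_smul_left, inner_smul_right, offDiagGramForm,
    ← sum_add_distrib]
  refine sum_congr rfl fun i hi => ?_
  rw [← add_sum_erase T _ hi, inner_self_eq_norm_sq_to_K, ofReal_mul, mul_pow, ← RCLike.conj_mul]
  simp_rw [mul_assoc]

theorem norm_sum_smul_sq_eq (f : ι → E) (T : Finset ι) (a : ι → 𝕜) :
    ‖∑ i ∈ T, a i • f i‖ ^ 2 = ∑ i ∈ T, ‖a i‖ ^ 2 * ‖f i‖ ^ 2 + re (offDiagGramForm f T a) := by
  rw [← inner_self_eq_norm_sq (𝕜 := 𝕜), inner_sum_smul_self_eq, map_add, map_sum]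
  simp_rw [← ofReal_pow, ofReal_re, mul_pow]

variable {f : ι → E} {T : Finset ι} {c : ℝ}

theorem norm_offDiagGramForm_le
    (hc : ∀ i ∈ T, ∑ m ∈ T.erase i, ‖inner 𝕜 (f i) (f m)‖ ^ 2 ≤ c) (a : ι → 𝕜) :
    ‖offDiagGramForm f T a‖ ≤ √(#T : ℝ) * √c * ∑ i ∈ T, ‖a i‖ ^ 2 := by
  set N := ∑ i ∈ T, ‖a i‖ ^ 2
  have hrow : ∀ i ∈ T, ∑ m ∈ T.erase i, ‖a m‖ * ‖inner 𝕜 (f i) (f m)‖ ≤ √N * √c :=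
    fun i hi => (Real.sum_mul_le_sqrt_mul_sqrt _ _ _).trans <| by
      gcongr
      · exact sum_le_sum_of_subset_of_nonneg (erase_subset i T) fun _ _ _ => by positivity
      · exact hc i hi
  have hsum : ∑ i ∈ T, ‖a i‖ ≤ √(#T : ℝ) * √N := by
    rw [← Real.sqrt_mul (Nat.cast_nonneg _), Real.le_sqrt (by positivity) (by positivity)]
    exact sq_sum_le_card_mul_sum_sq
  calc ‖offDiagGramForm f T a‖
      ≤ ∑ i ∈ T, ∑ m ∈ T.erase i, ‖a i‖ * (‖a m‖ * ‖inner 𝕜 (f i) (f m)‖) := by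
        refine (norm_sum_le _ _).trans (sum_le_sum fun i _ => (norm_sum_le _ _).trans ?_)
        simp_rw [norm_mul, RCLike.norm_conj, mul_assoc, le_refl]
    _ ≤ ∑ i ∈ T, ‖a i‖ * (√N * √c) := by
        gcongr with i hi
        rw [← mul_sum]
        gcongr
        exact hrow i hi
    _ = (∑ i ∈ T, ‖a i‖) * (√N * √c) := (sum_mul ..).symm
    _ ≤ √(#T : ℝ) * √N * (√N * √c) := by gcongr
    _ = √(#T : ℝ) * √c * N := by
        linear_combination √(#T : ℝ) * √c * Real.mul_self_sqrt (by positivity : 0 ≤ N)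

theorem abs_norm_sum_smul_sq_sub_le (hf : ∀ i ∈ T, ‖f i‖ = 1)
    (hc : ∀ i ∈ T, ∑ m ∈ T.erase i, ‖inner 𝕜 (f i) (f m)‖ ^ 2 ≤ c) (a : ι → 𝕜) :
    |‖∑ i ∈ T, a i • f i‖ ^ 2 - ∑ i ∈ T, ‖a i‖ ^ 2| ≤ √(#T : ℝ) * √c * ∑ i ∈ T, ‖a i‖ ^ 2 := by
  have hdiag : ∑ i ∈ T, ‖a i‖ ^ 2 * ‖f i‖ ^ 2 = ∑ i ∈ T, ‖a i‖ ^ 2 :=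
    sum_congr rfl fun i hi => by rw [hf i hi, one_pow, mul_one]
  rw [norm_sum_smul_sq_eq, hdiag, add_sub_cancel_left]
  exact (abs_re_le_norm _).trans (norm_offDiagGramForm_le hc a)

end OffDiagonal

theorem restricted_isometry_from_row_bounds_general
    (n M : ℕ) (f : Fin M → EuclideanSpace ℂ (Fin n))
    (hnorm : ∀ i, ‖f i‖ = 1)
    (B : ℝ)
    (S : ℕ) (δ : ℝ)
    (k : ℕ) (hkδ : Real.sqrt (B * S / k) ≤ δ)
    (r : ℕ) (part : Fin r → Finset (Fin M))
    (hblock : ∀ j, ∀ i ∈ part j,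
      ∑ m ∈ (part j).erase i, ‖(inner ℂ (f i) (f m) : ℂ)‖ ^ 2 ≤ B / k) :
    ∀ j, ∀ T ⊆ part j, T.card ≤ S → ∀ a : Fin M → ℂ,
      (1 - δ) * ∑ i ∈ T, ‖a i‖ ^ 2 ≤ ‖∑ i ∈ T, a i • f i‖ ^ 2 ∧
      ‖∑ i ∈ T, a i • f i‖ ^ 2 ≤ (1 + δ) * ∑ i ∈ T, ‖a i‖ ^ 2 := by
  intro j T hT hTS a
  have hrowT : ∀ i ∈ T, ∑ m ∈ T.erase i, ‖(inner ℂ (f i) (f m) : ℂ)‖ ^ 2 ≤ B / k :=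
    fun i hi => (sum_le_sum_of_subset_of_nonneg (erase_subset_erase i hT)
      fun _ _ _ => sq_nonneg _).trans (hblock j i (hT hi))
  have hconst : √(#T : ℝ) * √(B / k) ≤ δ :=
    calc √(#T : ℝ) * √(B / k) ≤ √(S : ℝ) * √(B / k) := by gcongr
      _ = √(B * S / k) := by rw [← Real.sqrt_mul (Nat.cast_nonneg S), mul_div_assoc', mul_comm]
      _ ≤ δ := hkδ
  have hdev := abs_le.mp <| (abs_norm_sum_smul_sq_sub_le (fun i _ => hnorm i) hrowT a).trans
    (mul_le_mul_of_nonneg_right hconst (by positivity))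
  constructor <;> linarith [hdev.1, hdev.2]

theorem restricted_isometry_from_row_bounds
    (n M : ℕ) (f : Fin M → EuclideanSpace ℂ (Fin n))
    (hnorm : ∀ i, ‖f i‖ = 1)
    (B : ℝ)
    (hBessel : ∀ g : EuclideanSpace ℂ (Fin n),
      ∑ i, ‖(inner ℂ g (f i) : ℂ)‖ ^ 2 ≤ B * ‖g‖ ^ 2)
    (hrow : ∀ i, ∑ m, ‖(inner ℂ (f i) (f m) : ℂ)‖ ^ 2 ≤ B)
    (S : ℕ) (δ : ℝ) (hδ : 0 < δ)
    (k : ℕ) (hk : 0 < k) (hkδ : Real.sqrt (B * S / k) ≤ δ)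
    (r : ℕ) (part : Fin r → Finset (Fin M))
    (hdisj : ∀ j l, j ≠ l → Disjoint (part j) (part l))
    (hcover : Finset.univ.biUnion part = Finset.univ)
    (hblock : ∀ j, ∀ i ∈ part j,
      ∑ m ∈ (part j).erase i, ‖(inner ℂ (f i) (f m) : ℂ)‖ ^ 2 ≤ B / k) :
    ∀ j, ∀ T ⊆ part j, T.card ≤ S → ∀ a : Fin M → ℂ,
      (1 - δ) * ∑ i ∈ T, ‖a i‖ ^ 2 ≤ ‖∑ i ∈ T, a i • f i‖ ^ 2 ∧
      ‖∑ i ∈ T, a i • f i‖ ^ 2 ≤ (1 + δ) * ∑ i ∈ T, ‖a i‖ ^ 2 :=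
  restricted_isometry_from_row_bounds_general n M f hnorm B S δ k hkδ r part hblock
end
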